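/- arXiv:2405.13958 — 10 statements merged into one kernel-verified Lean document; each statement's English description precedes it below -/
import Mathlib

section
/- Let β, β' be elements of the exponent set E_Γ with β' < β. Then β + (𝔫^r(β') − β') ∈ E_Γ for every r ≥ 1, where 𝔫 denotes the successor function on E_Γ. -/
/-- The set of exponents `E_Γ = ⋃_{1 ≤ j ≤ g} {β_j + k e_j : k ∈ ℤ_{≥0}}`. -/
def ExpSet (g : ℕ) (β e : ℕ → ℕ) : Set ℕ :=
  {m | ∃ j, 1 ≤ j ∧ j ≤ g ∧ ∃ k : ℕ, m = β j + k * e j}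

/-- The successor function `𝔫` on `E_Γ`: the least element of `E_Γ` strictly greater
than `m`. -/
noncomputable def nextExp (g : ℕ) (β e : ℕ → ℕ) (m : ℕ) : ℕ :=
  sInf {m' | m' ∈ ExpSet g β e ∧ m < m'}

/-!
Only two features of `E_Γ` matter: each `β_j` is a multiple of `e_j`, and the `e_j` form a
divisibility chain `e_g ∣ ⋯ ∣ e_1`. For `y ∈ E_Γ` let `j` be the largest index with `β_j ≤ y`;
every element of `E_Γ` below `y` lies on a progression of index `≤ j`, hence is a multiple of
`e_j`. So for `x, z ≤ y` in `E_Γ` the number `y + (z - x)` is a multiple of `e_j` that is at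
least `β_j`, i.e. it lies in `E_Γ`. Applying this with `x = 𝔫^r(β')`, `z = 𝔫^(r+1)(β')` and
`y = β + (𝔫^r(β') - β')`, which is an element of `E_Γ` above `x` and hence at least `z`,
gives the theorem by induction on `r`.
-/

namespace ExpSet

variable {g : ℕ} {β e : ℕ → ℕ}

theorem dvd_of_le_of_le (hchain : ∀ j, 1 ≤ j → j ≤ g → e j ∣ e (j - 1))
    {a b : ℕ} (hab : a ≤ b) (hb : b ≤ g) : e b ∣ e a := by
  induction b, hab using Nat.le_induction with
  | base => rfl
  | succ b hab ih => exact (hchain (b + 1) (by omega) hb).trans (ih (by omega))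

theorem mem_of_dvd (hβ : ∀ j, 1 ≤ j → j ≤ g → e j ∣ β j) {j m : ℕ} (hj : 1 ≤ j)
    (hjg : j ≤ g) (hβm : β j ≤ m) (hm : e j ∣ m) : m ∈ ExpSet g β e := by
  obtain ⟨k, hk⟩ := Nat.dvd_sub hm (hβ j hj hjg)
  exact ⟨j, hj, hjg, k, by rw [mul_comm] at hk; omega⟩

theorem exists_index_forall_dvd (hβ : ∀ j, 1 ≤ j → j ≤ g → e j ∣ β j)
    (hchain : ∀ j, 1 ≤ j → j ≤ g → e j ∣ e (j - 1)) {y : ℕ} (hy : y ∈ ExpSet g β e) :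
    ∃ j, 1 ≤ j ∧ j ≤ g ∧ β j ≤ y ∧ ∀ m ∈ ExpSet g β e, m ≤ y → e j ∣ m := by
  classical
  obtain ⟨i, hi, hig, k, rfl⟩ := hy
  set J := Nat.findGreatest (β · ≤ β i + k * e i) g
  have hiJ : i ≤ J := Nat.le_findGreatest hig (Nat.le_add_right _ _)
  refine ⟨J, hi.trans hiJ, Nat.findGreatest_le g,
    Nat.findGreatest_spec (P := (β · ≤ β i + k * e i)) hig (Nat.le_add_right _ _), ?_⟩
  rintro _ ⟨l, hl, hlg, k', rfl⟩ hle
  have hlJ : l ≤ J := Nat.le_findGreatest hlg (by omega)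
  exact (dvd_of_le_of_le hchain hlJ (Nat.findGreatest_le g)).trans
    ((hβ l hl hlg).add (dvd_mul_left _ _))

theorem add_sub_mem (hβ : ∀ j, 1 ≤ j → j ≤ g → e j ∣ β j)
    (hchain : ∀ j, 1 ≤ j → j ≤ g → e j ∣ e (j - 1)) {x y z : ℕ} (hx : x ∈ ExpSet g β e)
    (hy : y ∈ ExpSet g β e) (hz : z ∈ ExpSet g β e) (hxy : x ≤ y) (hzy : z ≤ y) :
    y + (z - x) ∈ ExpSet g β e := by
  obtain ⟨j, hj, hjg, hβy, hdvd⟩ := exists_index_forall_dvd hβ hchain hy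
  exact mem_of_dvd hβ hj hjg (by omega)
    ((hdvd y hy le_rfl).add (Nat.dvd_sub (hdvd z hz hzy) (hdvd x hx hxy)))

end ExpSet

namespace nextExp

variable {g : ℕ} {β e : ℕ → ℕ}

theorem spec {x y : ℕ} (hy : y ∈ ExpSet g β e) (hxy : x < y) :
    nextExp g β e x ∈ ExpSet g β e ∧ x < nextExp g β e x ∧ nextExp g β e x ≤ y :=
  have hnext := Nat.sInf_mem (s := {m | m ∈ ExpSet g β e ∧ x < m}) ⟨y, hy, hxy⟩
  ⟨hnext.1, hnext.2, Nat.sInf_le ⟨hy, hxy⟩⟩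

end nextExp

theorem add_iterate_next_sub_mem_expSet_general (g : ℕ)
    (β e : ℕ → ℕ)
    (he : ∀ j, 1 ≤ j → j ≤ g → e j = Nat.gcd (e (j - 1)) (β j))
    (β' b : ℕ) (hβ'mem : β' ∈ ExpSet g β e) (hbmem : b ∈ ExpSet g β e)
    (hlt : β' < b) :
    ∀ r : ℕ, 1 ≤ r → b + ((nextExp g β e)^[r] β' - β') ∈ ExpSet g β e := by
  have hβ : ∀ j, 1 ≤ j → j ≤ g → e j ∣ β j := fun j hj hjg =>
    he j hj hjg ▸ Nat.gcd_dvd_right _ _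
  have hchain : ∀ j, 1 ≤ j → j ≤ g → e j ∣ e (j - 1) := fun j hj hjg =>
    he j hj hjg ▸ Nat.gcd_dvd_left _ _
  suffices ∀ r, (nextExp g β e)^[r] β' ∈ ExpSet g β e ∧ β' ≤ (nextExp g β e)^[r] β' ∧
      b + ((nextExp g β e)^[r] β' - β') ∈ ExpSet g β e from fun r _ => (this r).2.2
  intro r
  induction r with
  | zero => exact ⟨hβ'mem, le_rfl, by simpa using hbmem⟩
  | succ r ih =>
    rw [Function.iterate_succ_apply']
    set x := (nextExp g β e)^[r] β'
    obtain ⟨hx, hβ'x, hy⟩ := ih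
    obtain ⟨hz, hxz, hzy⟩ := nextExp.spec hy (show x < b + (x - β') by omega)
    have hstep := ExpSet.add_sub_mem hβ hchain hx hy hz (by omega) hzy
    exact ⟨hz, by omega, by convert hstep using 1; omega⟩

/-- If `β', β ∈ E_Γ` with `β' < β`, then `β + (𝔫^r(β') − β') ∈ E_Γ` for every `r ≥ 1`. -/
theorem add_iterate_next_sub_mem_expSet (n g : ℕ) (hn : 2 ≤ n) (hg : 1 ≤ g)
    (β e : ℕ → ℕ)
    (he0 : e 0 = n)
    (he : ∀ j, 1 ≤ j → j ≤ g → e j = Nat.gcd (e (j - 1)) (β j))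
    (heg : e g = 1)
    (hβmono : ∀ j, 1 ≤ j → j < g → β j < β (j + 1))
    (hβ1 : ¬ n ∣ β 1)
    (β' b : ℕ) (hβ'mem : β' ∈ ExpSet g β e) (hbmem : b ∈ ExpSet g β e)
    (hlt : β' < b) :
    ∀ r : ℕ, 1 ≤ r → b + ((nextExp g β e)^[r] β' - β') ∈ ExpSet g β e :=
  add_iterate_next_sub_mem_expSet_general g β e he β' b hβ'mem hbmem hlt
end

section
/- For β ∈ E_Γ and e_β = gcd({n} ∪ {β' ∈ E_Γ : β' ≤ β}), every integer β + k·e_β with k ≥ 1 belongs to E_Γ. -/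
/-!
Let `J` be the largest index with `β_J ≤ β`. The chain `e_J ∣ e_j ∣ β_j` for `j ≤ J` shows that
`e_J` divides `n` and every exponent `≤ β`, hence `e_β`, and also `β - β_J`. Therefore
`β + k e_β` lies in the progression `β_J + e_J ℕ`.
-/

open scoped Classical

/-- `e_β = gcd({n} ∪ {β' ∈ E_Γ : β' ≤ β})`. -/
noncomputable def eOf (n g : ℕ) (β e : ℕ → ℕ) (b : ℕ) : ℕ :=
  Nat.gcd n (((Finset.range (b + 1)).filter (fun m => m ∈ ExpSet g β e)).gcd id)

section

variable {g : ℕ} {β e : ℕ → ℕ}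

theorem e_dvd_e_of_le (he : ∀ j, 1 ≤ j → j ≤ g → e j = Nat.gcd (e (j - 1)) (β j))
    {a c : ℕ} (hac : a ≤ c) (hc : c ≤ g) : e c ∣ e a := by
  induction c, hac using Nat.le_induction with
  | base => exact dvd_rfl
  | succ c hac ih =>
    rw [he (c + 1) (by omega) hc, Nat.add_sub_cancel]
    exact (Nat.gcd_dvd_left _ _).trans (ih (by omega))

theorem e_dvd_β (he : ∀ j, 1 ≤ j → j ≤ g → e j = Nat.gcd (e (j - 1)) (β j))
    {j : ℕ} (hj1 : 1 ≤ j) (hjg : j ≤ g) : e j ∣ β j := by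
  rw [he j hj1 hjg]
  exact Nat.gcd_dvd_right _ _

theorem e_dvd_add_mul (he : ∀ j, 1 ≤ j → j ≤ g → e j = Nat.gcd (e (j - 1)) (β j))
    {j J : ℕ} (hj1 : 1 ≤ j) (hjJ : j ≤ J) (hJg : J ≤ g) (k : ℕ) : e J ∣ β j + k * e j := by
  have hdvd := e_dvd_e_of_le he hjJ hJg
  exact dvd_add (hdvd.trans (e_dvd_β he hj1 (hjJ.trans hJg))) (hdvd.mul_left k)

theorem e_dvd_eOf {n b J : ℕ} (he0 : e 0 = n)
    (he : ∀ j, 1 ≤ j → j ≤ g → e j = Nat.gcd (e (j - 1)) (β j)) (hJg : J ≤ g)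
    (hmax : ∀ j, 1 ≤ j → j ≤ g → β j ≤ b → j ≤ J) : e J ∣ eOf n g β e b := by
  refine Nat.dvd_gcd (he0 ▸ e_dvd_e_of_le he J.zero_le hJg) (Finset.dvd_gcd fun m hm => ?_)
  obtain ⟨hmb, j, hj1, hjg, k, rfl⟩ := Finset.mem_filter.mp hm
  rw [Finset.mem_range] at hmb
  exact e_dvd_add_mul he hj1 (hmax j hj1 hjg (by omega)) hJg k

theorem mem_expSet_of_dvd (he : ∀ j, 1 ≤ j → j ≤ g → e j = Nat.gcd (e (j - 1)) (β j))
    {j m : ℕ} (hj1 : 1 ≤ j) (hjg : j ≤ g) (hle : β j ≤ m) (hdvd : e j ∣ m) :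
    m ∈ ExpSet g β e := by
  obtain ⟨q, hq⟩ := Nat.dvd_sub hdvd (e_dvd_β he hj1 hjg)
  exact ⟨j, hj1, hjg, q, by rw [Nat.mul_comm] at hq; omega⟩

end

theorem add_mul_eOf_mem_expSet_general (n g : ℕ)
    (β e : ℕ → ℕ)
    (he0 : e 0 = n)
    (he : ∀ j, 1 ≤ j → j ≤ g → e j = Nat.gcd (e (j - 1)) (β j))
    (b : ℕ) (hb : b ∈ ExpSet g β e) :
    ∀ k : ℕ, 1 ≤ k → b + k * eOf n g β e b ∈ ExpSet g β e := by
  intro k _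
  obtain ⟨i, hi1, hig, k₀, hb⟩ := hb
  set P : ℕ → Prop := fun j => 1 ≤ j ∧ β j ≤ b
  set J := Nat.findGreatest P g
  have hJ : 1 ≤ J ∧ β J ≤ b := Nat.findGreatest_spec (P := P) hig ⟨hi1, by omega⟩
  have hJg : J ≤ g := Nat.findGreatest_le g
  have hmax : ∀ j, 1 ≤ j → j ≤ g → β j ≤ b → j ≤ J :=
    fun j hj1 hjg hle => Nat.le_findGreatest hjg ⟨hj1, hle⟩
  have hJb : e J ∣ b := hb ▸ e_dvd_add_mul he hi1 (hmax i hi1 hig (by omega)) hJg k₀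
  exact mem_expSet_of_dvd he hJ.1 hJg (by omega)
    (dvd_add hJb ((e_dvd_eOf he0 he hJg hmax).mul_left k))

/-- For `β ∈ E_Γ` and `e_β = gcd({n} ∪ {β' ∈ E_Γ : β' ≤ β})`, every integer
`β + k·e_β` with `k ≥ 1` belongs to `E_Γ`. -/
theorem add_mul_eOf_mem_expSet (n g : ℕ) (hn : 2 ≤ n) (hg : 1 ≤ g)
    (β e : ℕ → ℕ)
    (he0 : e 0 = n)
    (he : ∀ j, 1 ≤ j → j ≤ g → e j = Nat.gcd (e (j - 1)) (β j))
    (heg : e g = 1)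
    (hβmono : ∀ j, 1 ≤ j → j < g → β j < β (j + 1))
    (b : ℕ) (hb : b ∈ ExpSet g β e) :
    ∀ k : ℕ, 1 ≤ k → b + k * eOf n g β e b ∈ ExpSet g β e :=
  add_mul_eOf_mem_expSet_general n g β e he0 he b hb
end

section
/- The set ⟨S⟩_𝒞 generated by a subset S ⊆ ℤ_{>0} as a C-collection consists exactly of all numbers of the form k + Σ_{j=1}^r (β̄_{b_j} − β̄_{a_j}) + s, where r ≥ 0, s ∈ S_Γ ∪ {0}, k ∈ S, and k ≤ β̄_{a₁} < β̄_{b₁} ≤ β̄_{a₂} < β̄_{b₂} ≤ ... < β̄_{b_r}. -/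
/-!
Every `𝒞`-collection containing `S` contains the numbers `k + Σ (β̄_{b_j} − β̄_{a_j}) + s`:
starting from `k ∈ S`, apply the exchange move `m ↦ m + β̄_{b_i} − β̄_{a_i}` once for each jump,
which is allowed because the partial sum before the `i`-th jump is at most `β̄_{b_{i-1}} ≤ β̄_{a_i}`
(at most `k ≤ β̄_{a_1}` for the first one), and finally add `s`.

Conversely these numbers form a `𝒞`-collection. The only point is the exchange move
`m ↦ m + β̄_l − β̄_j` with `m ≤ β̄_j`: since `β̄_{i+1} > 2 β̄_i`, the last jump
`β̄_{b_r} − β̄_{a_r}` already exceeds every `β̄_i` with `i < b_r`, so `m ≤ β̄_j` forces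
`β̄_{b_r} ≤ β̄_j`, and the move simply appends the jump `(j, l)` to the chain.
-/

/-- `T` is a `𝒞`-collection relative to the semigroup-with-zero `S₀ = S_Γ ∪ {0}` and the
minimal semigroup generators `bb 1 < ... < bb g`. -/
def IsCCollection (S₀ : Set ℕ) (g : ℕ) (bb : ℕ → ℕ) (T : Set ℕ) : Prop :=
  (∀ m ∈ T, 0 < m) ∧
  (∀ m ∈ T, ∀ s ∈ S₀, m + s ∈ T) ∧
  (∀ m ∈ T, ∀ j, 1 ≤ j → j ≤ g → m ≤ bb j → ∀ k, j ≤ k → k ≤ g → m + bb k - bb j ∈ T)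

/-- The smallest `𝒞`-collection containing `S`. -/
def genC (S₀ : Set ℕ) (g : ℕ) (bb : ℕ → ℕ) (S : Set ℕ) : Set ℕ :=
  ⋂₀ {T | IsCCollection S₀ g bb T ∧ S ⊆ T}

open Finset Function

section

variable {g : ℕ} {bb : ℕ → ℕ}

lemma strictMonoOn_of_two_mul_lt (hbig : ∀ j, 1 ≤ j → j < g → 2 * bb j < bb (j + 1)) :
    StrictMonoOn bb (Set.Icc 1 g) :=
  strictMonoOn_of_lt_add_one Set.ordConnected_Icc fun j _ hj hj' => by
    have := hbig j hj.1 (by simp only [Set.mem_Icc] at hj'; omega)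
    omega

lemma add_lt_of_two_mul_lt (hbig : ∀ j, 1 ≤ j → j < g → 2 * bb j < bb (j + 1))
    {i j l : ℕ} (hi : 1 ≤ i) (hj : 1 ≤ j) (hil : i < l) (hjl : j < l) (hl : l ≤ g) :
    bb i + bb j < bb l := by
  have hmono := (strictMonoOn_of_two_mul_lt hbig).monotoneOn
  have hi' : bb i ≤ bb (l - 1) := hmono ⟨hi, by omega⟩ ⟨by omega, by omega⟩ (by omega)
  have hj' : bb j ≤ bb (l - 1) := hmono ⟨hj, by omega⟩ ⟨by omega, by omega⟩ (by omega)
  have hlast := hbig (l - 1) (by omega) (by omega)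
  rw [Nat.sub_add_cancel (by omega)] at hlast
  omega

end

def jumpSum (bb a b : ℕ → ℕ) (r : ℕ) : ℕ :=
  ∑ j ∈ Icc 1 r, (bb (b j) - bb (a j))

def IsJumpChain (g : ℕ) (bb : ℕ → ℕ) (k : ℕ) (a b : ℕ → ℕ) (r : ℕ) : Prop :=
  (∀ j, 1 ≤ j → j ≤ r → 1 ≤ a j ∧ a j ≤ g ∧ 1 ≤ b j ∧ b j ≤ g ∧ bb (a j) < bb (b j)) ∧
  (1 ≤ r → k ≤ bb (a 1)) ∧
  (∀ j, 1 ≤ j → j < r → bb (b j) ≤ bb (a (j + 1)))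

def chainSet (S₀ : Set ℕ) (g : ℕ) (bb : ℕ → ℕ) (S : Set ℕ) : Set ℕ :=
  {m | ∃ r a b k s, k ∈ S ∧ s ∈ S₀ ∧ IsJumpChain g bb k a b r ∧ m = k + jumpSum bb a b r + s}

section

variable {g : ℕ} {bb a b : ℕ → ℕ} {k r : ℕ}

lemma jumpSum_succ (r : ℕ) :
    jumpSum bb a b (r + 1) = jumpSum bb a b r + (bb (b (r + 1)) - bb (a (r + 1))) :=
  sum_Icc_succ_top (by omega) _

lemma jumpSum_update_succ (r i l : ℕ) :
    jumpSum bb (update a (r + 1) i) (update b (r + 1) l) (r + 1) =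
      jumpSum bb a b r + (bb l - bb i) := by
  rw [jumpSum_succ, update_self, update_self]
  congr 1
  refine sum_congr rfl fun j hj => ?_
  have hne : j ≠ r + 1 := by simp only [mem_Icc] at hj; omega
  rw [update_of_ne hne, update_of_ne hne]

lemma sub_le_jumpSum (hr : 1 ≤ r) : bb (b r) - bb (a r) ≤ jumpSum bb a b r := by
  obtain ⟨r, rfl⟩ := Nat.exists_eq_add_of_le' hr
  rw [jumpSum_succ]
  omega

namespace IsJumpChain

lemma of_succ (h : IsJumpChain g bb k a b (r + 1)) : IsJumpChain g bb k a b r :=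
  ⟨fun j hj hjr => h.1 j hj (by omega), fun hr => h.2.1 (by omega),
    fun j hj hjr => h.2.2 j hj (by omega)⟩

lemma snoc (h : IsJumpChain g bb k a b r) {i l : ℕ} (hi : 1 ≤ i) (hig : i ≤ g) (hl : 1 ≤ l)
    (hlg : l ≤ g) (hil : bb i < bb l) (hki : k ≤ bb i) (hlast : 1 ≤ r → bb (b r) ≤ bb i) :
    IsJumpChain g bb k (update a (r + 1) i) (update b (r + 1) l) (r + 1) := by
  refine ⟨fun j hj hjr => ?_, fun _ => ?_, fun j hj hjr => ?_⟩
  · rcases eq_or_ne j (r + 1) with rfl | hne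
    · simpa only [update_self] using ⟨hi, hig, hl, hlg, hil⟩
    · simpa only [update_of_ne hne] using h.1 j hj (by omega)
  · rcases eq_or_ne r 0 with rfl | hr
    · simpa only [update_self] using hki
    · simpa only [update_of_ne (show 1 ≠ r + 1 by omega)] using h.2.1 (by omega)
  · rw [update_of_ne (show j ≠ r + 1 by omega)]
    rcases eq_or_ne j r with rfl | hne
    · simpa only [update_self] using hlast hj
    · rw [update_of_ne (show j + 1 ≠ r + 1 by omega)]
      exact h.2.2 j hj (by omega)

lemma add_jumpSum_le (h : IsJumpChain g bb k a b (r + 1)) :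
    k + jumpSum bb a b r ≤ bb (a (r + 1)) := by
  induction r with
  | zero => simpa [jumpSum] using h.2.1 le_rfl
  | succ r ih =>
    have hprev := ih h.of_succ
    have hjump := (h.1 (r + 1) (by omega) (by omega)).2.2.2.2
    have hlink := h.2.2 (r + 1) (by omega) (by omega)
    rw [jumpSum_succ]
    omega

lemma add_jumpSum_mem {S₀ : Set ℕ} {T : Set ℕ} (hmono : StrictMonoOn bb (Set.Icc 1 g))
    (hT : IsCCollection S₀ g bb T) (hk : k ∈ T) (h : IsJumpChain g bb k a b r) :
    k + jumpSum bb a b r ∈ T := by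
  induction r with
  | zero => simpa [jumpSum] using hk
  | succ r ih =>
    obtain ⟨ha, hag, hb, hbg, hab⟩ := h.1 (r + 1) (by omega) le_rfl
    have hab' : a (r + 1) ≤ b (r + 1) :=
      ((hmono.lt_iff_lt ⟨ha, hag⟩ ⟨hb, hbg⟩).1 hab).le
    have hle := h.add_jumpSum_le
    have hmove := hT.2.2 _ (ih h.of_succ) _ ha hag hle _ hab' hbg
    rwa [jumpSum_succ, ← add_assoc, ← Nat.add_sub_assoc hab.le]

lemma last_le_of_add_jumpSum_le (hbig : ∀ j, 1 ≤ j → j < g → 2 * bb j < bb (j + 1))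
    (h : IsJumpChain g bb k a b r) (hr : 1 ≤ r) {j : ℕ} (hj : 1 ≤ j) (hjg : j ≤ g)
    (hle : k + jumpSum bb a b r ≤ bb j) : bb (b r) ≤ bb j := by
  have hmono := strictMonoOn_of_two_mul_lt hbig
  obtain ⟨ha, hag, hb, hbg, hab⟩ := h.1 r hr le_rfl
  by_contra! hjb
  have hab' := (hmono.lt_iff_lt ⟨ha, hag⟩ ⟨hb, hbg⟩).1 hab
  have hjb' := (hmono.lt_iff_lt ⟨hj, hjg⟩ ⟨hb, hbg⟩).1 hjb
  have hsum := add_lt_of_two_mul_lt hbig ha hj hab' hjb' hbg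
  have hlast : bb (b r) - bb (a r) ≤ jumpSum bb a b r := sub_le_jumpSum hr
  omega

end IsJumpChain

end

section

variable {g : ℕ} {bb : ℕ → ℕ} {S : Set ℕ}

lemma subset_chainSet (S₀ : AddSubmonoid ℕ) : S ⊆ chainSet S₀ g bb S := fun m hm =>
  ⟨0, id, id, m, 0, hm, S₀.zero_mem, ⟨by omega, by omega, by omega⟩, by simp [jumpSum]⟩

lemma isCCollection_chainSet (S₀ : AddSubmonoid ℕ)
    (hbig : ∀ j, 1 ≤ j → j < g → 2 * bb j < bb (j + 1)) (hS : ∀ m ∈ S, 0 < m) :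
    IsCCollection S₀ g bb (chainSet S₀ g bb S) := by
  refine ⟨?_, ?_, ?_⟩
  · rintro m ⟨r, a, b, k, s, hk, -, -, rfl⟩
    have := hS k hk
    omega
  · rintro m ⟨r, a, b, k, s, hk, hs, hc, rfl⟩ s' hs'
    exact ⟨r, a, b, k, s + s', hk, S₀.add_mem hs hs', hc, by omega⟩
  · rintro m hm j hj hjg hmj l hjl hlg
    rcases hjl.eq_or_lt with rfl | hjl
    · simpa using hm
    obtain ⟨r, a, b, k, s, hk, hs, hc, rfl⟩ := hm
    have hjl' : bb j < bb l := strictMonoOn_of_two_mul_lt hbig ⟨hj, hjg⟩ ⟨by omega, hlg⟩ hjl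
    refine ⟨r + 1, update a (r + 1) j, update b (r + 1) l, k, s, hk, hs,
      hc.snoc hj hjg (by omega) hlg hjl' (by omega)
        fun hr => hc.last_le_of_add_jumpSum_le hbig hr hj hjg (by omega), ?_⟩
    rw [jumpSum_update_succ]
    omega

lemma chainSet_subset {S₀ T : Set ℕ} (hmono : StrictMonoOn bb (Set.Icc 1 g))
    (hT : IsCCollection S₀ g bb T) (hST : S ⊆ T) : chainSet S₀ g bb S ⊆ T := by
  rintro m ⟨r, a, b, k, s, hk, hs, hc, rfl⟩
  exact hT.2.1 _ (hc.add_jumpSum_mem hmono hT (hST hk)) s hs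

lemma genC_eq {S₀ U : Set ℕ} (hU : IsCCollection S₀ g bb U) (hSU : S ⊆ U)
    (hmin : ∀ T, IsCCollection S₀ g bb T → S ⊆ T → U ⊆ T) : genC S₀ g bb S = U := by
  have hU_mem : U ∈ {T | IsCCollection S₀ g bb T ∧ S ⊆ T} := ⟨hU, hSU⟩
  exact (Set.sInter_subset_of_mem hU_mem).antisymm fun _ hm =>
    Set.mem_sInter.2 fun T hT => hmin T hT.1 hT.2 hm

end

theorem genC_description_general (n g : ℕ)
    (bb : ℕ → ℕ)
    (hbig : ∀ j, 1 ≤ j → j < g → 2 * bb j < bb (j + 1))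
    (S₀ : Set ℕ)
    (hS₀ : S₀ = (AddSubmonoid.closure ({n} ∪ bb '' Set.Icc 1 g) : AddSubmonoid ℕ))
    (S : Set ℕ) (hS : ∀ m ∈ S, 0 < m) :
    genC S₀ g bb S =
      {m | ∃ (r : ℕ) (a b : ℕ → ℕ) (k s : ℕ), k ∈ S ∧ s ∈ S₀ ∧
        (∀ j, 1 ≤ j → j ≤ r →
          1 ≤ a j ∧ a j ≤ g ∧ 1 ≤ b j ∧ b j ≤ g ∧ bb (a j) < bb (b j)) ∧
        (1 ≤ r → k ≤ bb (a 1)) ∧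
        (∀ j, 1 ≤ j → j < r → bb (b j) ≤ bb (a (j + 1))) ∧
        m = k + (∑ j ∈ Finset.Icc 1 r, (bb (b j) - bb (a j))) + s} := by
  subst hS₀
  rw [genC_eq (isCCollection_chainSet _ hbig hS) (subset_chainSet _)
    fun T hT hST => chainSet_subset (strictMonoOn_of_two_mul_lt hbig) hT hST]
  simp only [chainSet, IsJumpChain, jumpSum, and_assoc]

/-- The `𝒞`-collection generated by `S ⊆ ℤ_{>0}` consists exactly of the numbers
`k + Σ_{j=1}^r (β̄_{b_j} − β̄_{a_j}) + s` with `r ≥ 0`, `s ∈ S_Γ ∪ {0}`, `k ∈ S` and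
`k ≤ β̄_{a₁} < β̄_{b₁} ≤ β̄_{a₂} < β̄_{b₂} ≤ ⋯ < β̄_{b_r}`. -/
theorem genC_description (n g : ℕ) (hn : 2 ≤ n) (hg : 1 ≤ g)
    (bb : ℕ → ℕ)
    (hpos : ∀ j, 1 ≤ j → j ≤ g → 0 < bb j)
    (hmono : ∀ j, 1 ≤ j → j < g → bb j < bb (j + 1))
    (hbig : ∀ j, 1 ≤ j → j < g → 2 * bb j < bb (j + 1))
    (S₀ : Set ℕ)
    (hS₀ : S₀ = (AddSubmonoid.closure ({n} ∪ bb '' Set.Icc 1 g) : AddSubmonoid ℕ))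
    (S : Set ℕ) (hS : ∀ m ∈ S, 0 < m) :
    genC S₀ g bb S =
      {m | ∃ (r : ℕ) (a b : ℕ → ℕ) (k s : ℕ), k ∈ S ∧ s ∈ S₀ ∧
        (∀ j, 1 ≤ j → j ≤ r →
          1 ≤ a j ∧ a j ≤ g ∧ 1 ≤ b j ∧ b j ≤ g ∧ bb (a j) < bb (b j)) ∧
        (1 ≤ r → k ≤ bb (a 1)) ∧
        (∀ j, 1 ≤ j → j < r → bb (b j) ≤ bb (a (j + 1))) ∧
        m = k + (∑ j ∈ Finset.Icc 1 r, (bb (b j) - bb (a j))) + s} :=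
  genC_description_general n g bb hbig S₀ hS₀ S hS
end

section
/- The set ⟨S⟩_{𝒞^w} generated by a subset S ⊆ ℤ_{>0} as a 𝒞^w-collection equals the union of S + (S_Γ ∪ {0}) with all numbers of the form k + β̄_b − β̄_a + s, where k ∈ S, s ∈ S_Γ ∪ {0}, k ≤ β̄_a < β̄_b, and k ≡ β_a (mod e_{a−1}). -/
/-- `T` is a `𝒞^w`-collection relative to the semigroup-with-zero `S₀ = S_Γ ∪ {0}`,
the Puiseux exponents `β`, the gcd sequence `e` and the semigroup generators `bb`. -/
def IsCwCollection (S₀ : Set ℕ) (g : ℕ) (β e bb : ℕ → ℕ) (T : Set ℕ) : Prop :=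
  (∀ m ∈ T, 0 < m) ∧
  (∀ m ∈ T, ∀ s ∈ S₀, m + s ∈ T) ∧
  (∀ lam ∈ T, ∀ l, 1 ≤ l → l < g → lam ≤ bb l → lam % e (l - 1) = β l % e (l - 1) →
    lam + bb (l + 1) - bb l ∈ T)

/-- The smallest `𝒞^w`-collection containing `S`. -/
def genCw (S₀ : Set ℕ) (g : ℕ) (β e bb : ℕ → ℕ) (S : Set ℕ) : Set ℕ :=
  ⋂₀ {T | IsCwCollection S₀ g β e bb T ∧ S ⊆ T}

private theorem modAux (d x y u v : ℕ) (h : x + d * u = y + d * v) : x % d = y % d := by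
  have h1 : (x + d * u) % d = x % d := Nat.add_mul_mod_self_left x d u
  have h2 : (y + d * v) % d = y % d := Nat.add_mul_mod_self_left y d v
  rw [← h1, h, h2]

/-- The `𝒞^w`-collection generated by `S ⊆ ℤ_{>0}` equals the union of `S + (S_Γ ∪ {0})`
with all numbers `k + β̄_b − β̄_a + s` where `k ∈ S`, `s ∈ S_Γ ∪ {0}`, `k ≤ β̄_a < β̄_b`
and `k ≡ β_a (mod e_{a−1})`. -/
theorem genCw_description (n g : ℕ) (hn : 2 ≤ n) (hg : 1 ≤ g)
    (β e nn bb : ℕ → ℕ)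
    (he0 : e 0 = n)
    (he : ∀ j, 1 ≤ j → j ≤ g → e j = Nat.gcd (e (j - 1)) (β j))
    (heg : e g = 1)
    (hβmono : ∀ j, 1 ≤ j → j < g → β j < β (j + 1))
    (hchar : ∀ j, 1 ≤ j → j ≤ g → ¬ e (j - 1) ∣ β j)
    (hβ1 : n < β 1)
    (hnn : ∀ j, 1 ≤ j → j ≤ g → nn j = e (j - 1) / e j)
    (hbb1 : bb 1 = β 1)
    (hbb : ∀ j, 2 ≤ j → j ≤ g → bb j = nn (j - 1) * bb (j - 1) - β (j - 1) + β j)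
    (S₀ : Set ℕ)
    (hS₀ : S₀ = (AddSubmonoid.closure ({n} ∪ bb '' Set.Icc 1 g) : AddSubmonoid ℕ))
    (S : Set ℕ) (hS : ∀ m ∈ S, 0 < m) :
    genCw S₀ g β e bb S =
      {m | ∃ k ∈ S, ∃ s ∈ S₀, m = k + s} ∪
      {m | ∃ k ∈ S, ∃ s ∈ S₀, ∃ a b : ℕ, 1 ≤ a ∧ a < b ∧ b ≤ g ∧
        k ≤ bb a ∧ k % e (a - 1) = β a % e (a - 1) ∧
        m = k + bb b - bb a + s} := by
  subst hS₀
  -- Basic facts about `e`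
  have e1 : ∀ j, 1 ≤ j → j ≤ g → e j ∣ e (j - 1) ∧ e j ∣ β j := by
    intro j h1 h2
    rw [he j h1 h2]
    exact ⟨Nat.gcd_dvd_left _ _, Nat.gcd_dvd_right _ _⟩
  have epos : ∀ j, j ≤ g → 0 < e j := by
    intro j
    induction j with
    | zero => intro _; rw [he0]; omega
    | succ j ih =>
      intro hj
      have h := he (j + 1) (by omega) hj
      simp only [Nat.add_sub_cancel] at h
      rw [h]
      exact Nat.gcd_pos_of_pos_left _ (ih (by omega))
  have echain : ∀ j, j ≤ g → ∀ i, i ≤ j → e j ∣ e i := by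
    intro j
    induction j with
    | zero =>
      intro _ i hi
      have : i = 0 := by omega
      rw [this]
    | succ j ih =>
      intro hj i hi
      have hd : e (j + 1) ∣ e j := by
        have h := (e1 (j + 1) (by omega) hj).1
        simpa using h
      rcases Nat.eq_or_lt_of_le hi with h | h
      · rw [← h]
      · exact hd.trans (ih (by omega) i (by omega))
  have nnfact : ∀ j, 1 ≤ j → j ≤ g → 2 ≤ nn j ∧ nn j * e j = e (j - 1) := by
    intro j h1 h2
    have hd := (e1 j h1 h2).1
    have hne : e j ≠ e (j - 1) := by
      intro hEq
      exact hchar j h1 h2 (hEq ▸ (e1 j h1 h2).2)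
    have hmul : nn j * e j = e (j - 1) := by
      rw [hnn j h1 h2]; exact Nat.div_mul_cancel hd
    have hpj : 0 < e j := epos j h2
    have hpj1 : 0 < e (j - 1) := epos (j - 1) (by omega)
    refine ⟨?_, hmul⟩
    by_contra hlt
    push_neg at hlt
    have : nn j = 0 ∨ nn j = 1 := by omega
    rcases this with h | h
    · rw [h, zero_mul] at hmul; omega
    · rw [h, one_mul] at hmul; exact hne hmul
  -- Basic facts about `bb`
  have bbβ : ∀ j, 1 ≤ j → j ≤ g → β j ≤ bb j := by
    intro j
    induction j with
    | zero => intro h1 _; omega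
    | succ j ih =>
      intro _ h2
      by_cases hj : j = 0
      · rw [hj]; rw [show (0:ℕ)+1 = 1 from rfl, hbb1]
      · have hb := hbb (j + 1) (by omega) h2
        simp only [Nat.add_sub_cancel] at hb
        have hnn2 := (nnfact j (by omega) (by omega)).1
        have hih := ih (by omega) (by omega)
        have hP : bb j ≤ nn j * bb j := Nat.le_mul_of_pos_left _ (by omega)
        omega
  have bbstep : ∀ j, 1 ≤ j → j < g → bb j + bb j + β (j + 1) ≤ bb (j + 1) + β j := by
    intro j h1 h2
    have hb := hbb (j + 1) (by omega) (by omega)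
    simp only [Nat.add_sub_cancel] at hb
    have hnn2 := (nnfact j h1 (by omega)).1
    have hββ := bbβ j h1 (by omega)
    have hP : 2 * bb j ≤ nn j * bb j := Nat.mul_le_mul hnn2 (le_refl (bb j))
    omega
  have bblt : ∀ j, 1 ≤ j → j < g → bb j < bb (j + 1) := by
    intro j h1 h2
    have h3 := bbstep j h1 h2
    have h4 := hβmono j h1 h2
    have h5 := bbβ j h1 (by omega)
    have h6 : 0 < β j := by
      rcases Nat.eq_zero_or_pos (β j) with h | h
      · exact absurd (by rw [h]; exact dvd_zero _) (hchar j h1 (by omega))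
      · exact h
    omega
  have bble : ∀ j, j ≤ g → ∀ i, 1 ≤ i → i ≤ j → bb i ≤ bb j := by
    intro j
    induction j with
    | zero => intro _ i h1 h2; omega
    | succ j ih =>
      intro hj i h1 h2
      rcases Nat.eq_or_lt_of_le h2 with h | h
      · rw [h]
      · exact (ih (by omega) i h1 (by omega)).trans (le_of_lt (bblt j (by omega) (by omega)))
  have bbslt : ∀ i j, 1 ≤ i → i < j → j ≤ g → bb i < bb j := by
    intro i j h1 h2 h3
    have h4 : bb i ≤ bb (j - 1) := bble (j - 1) (by omega) i h1 (by omega)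
    have h5 : bb (j - 1) < bb ((j - 1) + 1) := bblt (j - 1) (by omega) (by omega)
    have h6 : j - 1 + 1 = j := by omega
    rw [h6] at h5
    omega
  have bbgap : ∀ a l b, 1 ≤ a → 1 ≤ l → a < b → l < b → b ≤ g → bb a + bb l < bb b := by
    intro a l b ha hl hab hlb hbg
    have h1 := bbstep (b - 1) (by omega) (by omega)
    have h6 : b - 1 + 1 = b := by omega
    rw [h6] at h1
    have h2 := hβmono (b - 1) (by omega) (by omega)
    rw [h6] at h2
    have h3 : bb a ≤ bb (b - 1) := bble (b - 1) (by omega) a ha (by omega)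
    have h4 : bb l ≤ bb (b - 1) := bble (b - 1) (by omega) l hl (by omega)
    omega
  have edvd_bb : ∀ i, 1 ≤ i → i ≤ g → e i ∣ bb i := by
    intro i
    induction i with
    | zero => intro h1 _; omega
    | succ i ih =>
      intro _ h2
      by_cases hi : i = 0
      · rw [hi]
        have h := (e1 1 (by omega) (by omega)).2
        rw [show (0:ℕ)+1 = 1 from rfl, hbb1]
        simpa using h
      · have hb := hbb (i + 1) (by omega) h2
        simp only [Nat.add_sub_cancel] at hb
        have d1 : e (i + 1) ∣ e i := by
          have h := (e1 (i + 1) (by omega) h2).1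
          simpa using h
        have d2 : e i ∣ bb i := ih (by omega) (by omega)
        have d3 : e i ∣ β i := (e1 i (by omega) (by omega)).2
        have d4 : e (i + 1) ∣ β (i + 1) := by
          have h := (e1 (i + 1) (by omega) h2).2
          simpa using h
        have hnn2 := (nnfact i (by omega) (by omega)).1
        have hββ := bbβ i (by omega) (by omega)
        have hle : β i ≤ nn i * bb i :=
          le_trans hββ (Nat.le_mul_of_pos_left _ (by omega))
        have heq : bb (i + 1) + β i = nn i * bb i + β (i + 1) := by omega
        have d5 : e (i + 1) ∣ nn i * bb i + β (i + 1) :=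
          dvd_add (Dvd.dvd.mul_left (d1.trans d2) _) d4
        rw [← heq] at d5
        have d6 : e (i + 1) ∣ β i := d1.trans d3
        have d7 := Nat.dvd_sub d5 d6
        simpa [Nat.add_sub_cancel] using d7
  have bbmod : ∀ j, 1 ≤ j → j ≤ g → bb j % e (j - 1) = β j % e (j - 1) := by
    intro j h1 h2
    by_cases hj : j = 1
    · rw [hj, hbb1]
    · have hb := hbb j (by omega) h2
      obtain ⟨u, hu⟩ : e (j - 1) ∣ nn (j - 1) * bb (j - 1) :=
        Dvd.dvd.mul_left (edvd_bb (j - 1) (by omega) (by omega)) _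
      obtain ⟨v, hv⟩ : e (j - 1) ∣ β (j - 1) := by
        have h := (e1 (j - 1) (by omega) (by omega)).2
        have h6 : j - 1 - 1 = j - 2 := by omega
        exact h
      apply modAux (e (j - 1)) (bb j) (β j) v u
      rw [← hu, ← hv]
      have hnn2 := (nnfact (j - 1) (by omega) (by omega)).1
      have hββ := bbβ (j - 1) (by omega) (by omega)
      have hle : β (j - 1) ≤ nn (j - 1) * bb (j - 1) :=
        le_trans hββ (Nat.le_mul_of_pos_left _ (by omega))
      omega
  have dvdk : ∀ a, 1 ≤ a → a ≤ g → ∀ k, k % e (a - 1) = β a % e (a - 1) → e a ∣ k := by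
    intro a h1 h2 k hk
    have h3 : Nat.ModEq (e (a - 1)) k (β a) := hk
    have h4 : Nat.ModEq (e a) k (β a) := h3.of_dvd (e1 a h1 h2).1
    have h5 : Nat.ModEq (e a) (β a) 0 := Nat.modEq_zero_iff_dvd.mpr (e1 a h1 h2).2
    exact Nat.modEq_zero_iff_dvd.mp (h4.trans h5)
  -- S₀ facts
  set G : Set ℕ := {n} ∪ bb '' Set.Icc 1 g with hG
  have hzero : (0 : ℕ) ∈ (AddSubmonoid.closure G : Set ℕ) := AddSubmonoid.zero_mem _
  have hadd : ∀ s ∈ (AddSubmonoid.closure G : Set ℕ), ∀ t ∈ (AddSubmonoid.closure G : Set ℕ),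
      s + t ∈ (AddSubmonoid.closure G : Set ℕ) := fun s hs t ht => AddSubmonoid.add_mem _ hs ht
  have decomp : ∀ l, 1 ≤ l → l ≤ g → ∀ s ∈ (AddSubmonoid.closure G : Set ℕ),
      s < bb l → e (l - 1) ∣ s := by
    intro l hl1 hl2 s hs
    induction hs using AddSubmonoid.closure_induction with
    | mem x hx =>
      intro hxl
      rcases hx with hx | ⟨i, ⟨hi1, hi2⟩, rfl⟩
      · rw [Set.mem_singleton_iff] at hx
        rw [hx, ← he0]
        exact echain (l - 1) (by omega) 0 (by omega)
      · by_cases hil : i ≤ l - 1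
        · exact (echain (l - 1) (by omega) i hil).trans (edvd_bb i hi1 hi2)
        · exact absurd hxl (by
            push_neg
            exact bble i hi2 l hl1 (by omega))
    | zero => intro _; exact dvd_zero _
    | add x y hx hy ihx ihy =>
      intro hxy
      exact dvd_add (ihx (by omega)) (ihy (by omega))
  -- main proof
  apply Set.Subset.antisymm
  · -- genCw ⊆ RHS
    intro m hm
    simp only [genCw, Set.mem_sInter] at hm
    apply hm
    constructor
    · -- the RHS is a 𝒞^w-collection
      refine ⟨?_, ?_, ?_⟩
      · -- positivity
        intro m hm
        rcases hm with ⟨k, hk, s, hs, rfl⟩ | ⟨k, hk, s, hs, a, b, ha, hab, hbg, hka, hkm, rfl⟩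
        · have := hS k hk; omega
        · have h1 := hS k hk
          have h2 : bb a < bb b := bbslt a b ha hab hbg
          omega
      · -- closed under adding S₀
        intro m hm s' hs'
        rcases hm with ⟨k, hk, s, hs, rfl⟩ | ⟨k, hk, s, hs, a, b, ha, hab, hbg, hka, hkm, rfl⟩
        · exact Or.inl ⟨k, hk, s + s', hadd s hs s' hs', by omega⟩
        · refine Or.inr ⟨k, hk, s + s', hadd s hs s' hs', a, b, ha, hab, hbg, hka, hkm, ?_⟩
          have h2 : bb a < bb b := bbslt a b ha hab hbg
          omega
      · -- the step condition
        intro m hm l hl1 hlg hml hmod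
        rcases hm with ⟨k, hk, s, hs, rfl⟩ | ⟨k, hk, s, hs, a, b, ha, hab, hbg, hka, hkmod, rfl⟩
        · -- m = k + s
          have hkpos := hS k hk
          have hsl : s < bb l := by omega
          have hds : e (l - 1) ∣ s := decomp l hl1 (by omega) s hs hsl
          obtain ⟨u, hu⟩ := hds
          have hkm : k % e (l - 1) = β l % e (l - 1) := by
            have h1 : (k + e (l - 1) * u) % e (l - 1) = k % e (l - 1) :=
              Nat.add_mul_mod_self_left k (e (l - 1)) u
            rw [← h1, ← hu]
            exact hmod
          have hbll : bb l < bb (l + 1) := bblt l hl1 hlg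
          exact Or.inr ⟨k, hk, s, hs, l, l + 1, hl1, by omega, by omega, by omega, hkm, by omega⟩
        · -- m = k + bb b - bb a + s
          have hkpos := hS k hk
          have hba : bb a < bb b := bbslt a b ha hab hbg
          have hblel : b ≤ l := by
            by_contra hbl
            push_neg at hbl
            have := bbgap a l b ha hl1 hab hbl hbg
            omega
          have hdk : e a ∣ k := dvdk a ha (by omega) k hkmod
          have hsl : s < bb l := by omega
          have hds : e (l - 1) ∣ s := decomp l hl1 (by omega) s hs hsl
          have hbl : b = l := by
            rcases Nat.eq_or_lt_of_le hblel with h | h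
            · exact h
            · exfalso
              have hdbb : e (l - 1) ∣ bb b :=
                (echain (l - 1) (by omega) b (by omega)).trans (edvd_bb b (by omega) (by omega))
              have hdba : e (l - 1) ∣ bb a :=
                (echain (l - 1) (by omega) a (by omega)).trans (edvd_bb a ha (by omega))
              have hdk' : e (l - 1) ∣ k := (echain (l - 1) (by omega) a (by omega)).trans hdk
              have hdm : e (l - 1) ∣ (k + bb b - bb a + s) :=
                dvd_add (Nat.dvd_sub (dvd_add hdk' hdbb) hdba) hds
              have h0 : Nat.ModEq (e (l - 1)) 0 (β l) :=
                (Nat.modEq_zero_iff_dvd.mpr hdm).symm.trans hmod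
              exact hchar l hl1 (by omega) (Nat.modEq_zero_iff_dvd.mp h0.symm)
          subst hbl
          have hbll : bb b < bb (b + 1) := bblt b hl1 hlg
          exact Or.inr ⟨k, hk, s, hs, a, b + 1, ha, by omega, by omega, hka, hkmod, by omega⟩
    · -- S ⊆ RHS
      intro k hk
      exact Or.inl ⟨k, hk, 0, hzero, by omega⟩
  · -- RHS ⊆ genCw
    intro m hm
    simp only [genCw, Set.mem_sInter]
    rintro T ⟨⟨hTpos, hTadd, hTstep⟩, hST⟩
    have chain : ∀ b, b ≤ g → ∀ a, 1 ≤ a → a ≤ b → ∀ k ∈ T, k ≤ bb a →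
        k % e (a - 1) = β a % e (a - 1) → k + bb b - bb a ∈ T := by
      intro b
      induction b with
      | zero => intro _ a ha hab k hkT hka hkm; exact absurd hab (by omega)
      | succ b ih =>
        intro hbg a ha hab k hkT hka hkm
        rcases Nat.eq_or_lt_of_le hab with h | h
        · have heq : k + bb (b + 1) - bb a = k := by rw [← h]; omega
          rw [heq]; exact hkT
        · have hab' : a ≤ b := by omega
          have hprev : k + bb b - bb a ∈ T := ih (by omega) a ha hab' k hkT hka hkm
          have hba : bb a ≤ bb b := bble b (by omega) a ha hab'
          have hlam : k + bb b - bb a ≤ bb b := by omega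
          have hmodb : (k + bb b - bb a) % e (b - 1) = β b % e (b - 1) := by
            rcases Nat.eq_or_lt_of_le hab' with h2 | h2
            · have heq : k + bb b - bb a = k := by rw [← h2]; omega
              rw [heq, ← h2]
              exact hkm
            · have hdk : e a ∣ k := dvdk a ha (by omega) k hkm
              have hdk' : e (b - 1) ∣ k := (echain (b - 1) (by omega) a (by omega)).trans hdk
              have hdba : e (b - 1) ∣ bb a :=
                (echain (b - 1) (by omega) a (by omega)).trans (edvd_bb a ha (by omega))
              have h1 : (k + bb b - bb a) + bb a = k + bb b := by omega
              have ck : Nat.ModEq (e (b - 1)) k (bb a) :=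
                (Nat.modEq_zero_iff_dvd.mpr hdk').trans (Nat.modEq_zero_iff_dvd.mpr hdba).symm
              have cb : Nat.ModEq (e (b - 1)) (bb b) (β b) := bbmod b (by omega) (by omega)
              have c3 : Nat.ModEq (e (b - 1)) ((k + bb b - bb a) + bb a) (β b + bb a) := by
                rw [h1]
                calc k + bb b ≡ bb a + β b [MOD e (b - 1)] := ck.add cb
                  _ = β b + bb a := add_comm _ _
              exact Nat.ModEq.add_right_cancel' (bb a) c3
          have hstep := hTstep (k + bb b - bb a) hprev b (by omega) (by omega) hlam hmodb
          have heq : (k + bb b - bb a) + bb (b + 1) - bb b = k + bb (b + 1) - bb a := by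
            have : bb b ≤ bb (b + 1) := le_of_lt (bblt b (by omega) (by omega))
            omega
          rwa [heq] at hstep
    rcases hm with ⟨k, hk, s, hs, rfl⟩ | ⟨k, hk, s, hs, a, b, ha, hab, hbg, hka, hkmod, rfl⟩
    · exact hTadd k (hST hk) s hs
    · have h1 : k + bb b - bb a ∈ T := chain b hbg a ha (by omega) k (hST hk) hka hkmod
      exact hTadd _ h1 s hs
end

section
/- If T is a 𝒞^w-collection, λ ∈ T with λ ≤ β̄_l and λ ≡ β_l (mod e_{l-1}), then λ + β̄_k − β̄_l ∈ T for every l < k ≤ g. -/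
/-!
Iterate the one-step property. The shifted value `μ_i = λ + β̄_i − β̄_l` satisfies the
hypotheses of that property at every level `i`: `μ_i ≤ β̄_i` because `λ ≤ β̄_l`, and
`μ_i ≡ β_i (mod e_{i−1})` propagates because `e_i ∣ β̄_i` and `β̄_{i+1} ≡ β_{i+1} (mod e_i)`,
so that modulo `e_i` both `μ_i` and `β̄_i` vanish. Since `β̄` is increasing (from `n_i ≥ 1`
and `β_i < β_{i+1}`), the truncated subtractions in `ℕ` agree with the true ones.
-/

namespace PlaneBranch

def GcdRecursion (g : ℕ) (β e : ℕ → ℕ) : Prop :=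
  ∀ j, 1 ≤ j → j ≤ g → e j = Nat.gcd (e (j - 1)) (β j)

def GeneratorRecursion (g : ℕ) (β nn bb : ℕ → ℕ) : Prop :=
  bb 1 = β 1 ∧ ∀ j, 2 ≤ j → j ≤ g → bb j = nn (j - 1) * bb (j - 1) - β (j - 1) + β j

variable {g : ℕ} {β e nn bb : ℕ → ℕ}

theorem GcdRecursion.pos (he : GcdRecursion g β e) (h0 : 0 < e 0) : ∀ j ≤ g, 0 < e j := by
  intro j
  induction j with
  | zero => exact fun _ => h0
  | succ j ih =>
    intro hj
    rw [he (j + 1) j.succ_pos hj, Nat.add_sub_cancel]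
    exact Nat.gcd_pos_of_pos_left _ (ih (by omega))

theorem GcdRecursion.dvd_pred (he : GcdRecursion g β e) {j : ℕ} (h1 : 1 ≤ j) (hj : j ≤ g) :
    e j ∣ e (j - 1) :=
  he j h1 hj ▸ Nat.gcd_dvd_left _ _

theorem GcdRecursion.dvd_β (he : GcdRecursion g β e) {j : ℕ} (h1 : 1 ≤ j) (hj : j ≤ g) :
    e j ∣ β j :=
  he j h1 hj ▸ Nat.gcd_dvd_right _ _

theorem GeneratorRecursion.succ_eq (hbb : GeneratorRecursion g β nn bb) {j : ℕ} (h1 : 1 ≤ j)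
    (hj : j < g) : bb (j + 1) = nn j * bb j - β j + β (j + 1) := by
  simpa using hbb.2 (j + 1) (by omega) hj

theorem GeneratorRecursion.β_le (hbb : GeneratorRecursion g β nn bb) {j : ℕ} (h1 : 1 ≤ j)
    (hj : j ≤ g) : β j ≤ bb j := by
  rcases h1.eq_or_lt with rfl | h2
  · exact hbb.1.ge
  · rw [hbb.2 j h2 hj]
    exact Nat.le_add_left _ _

theorem bb_succ_modEq (he : GcdRecursion g β e) (hbb : GeneratorRecursion g β nn bb) {j : ℕ}
    (h1 : 1 ≤ j) (hj : j < g) (hdvd : e j ∣ bb j) : bb (j + 1) ≡ β (j + 1) [MOD e j] := by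
  have hsub : e j ∣ nn j * bb j - β j := Nat.dvd_sub (hdvd.mul_left _) (he.dvd_β h1 hj.le)
  rw [hbb.succ_eq h1 hj]
  simpa using (Nat.modEq_zero_iff_dvd.2 hsub).add_right (β (j + 1))

theorem e_dvd_bb (he : GcdRecursion g β e) (hbb : GeneratorRecursion g β nn bb) {j : ℕ}
    (h1 : 1 ≤ j) (hj : j ≤ g) : e j ∣ bb j := by
  induction j, h1 using Nat.le_induction with
  | base => exact hbb.1 ▸ he.dvd_β le_rfl hj
  | succ j h1 ih =>
    have hmod := bb_succ_modEq he hbb h1 hj (ih (by omega))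
    exact ((hmod.of_dvd (he.dvd_pred (by omega) hj)).dvd_iff dvd_rfl).2 (he.dvd_β (by omega) hj)

theorem bb_le_bb_succ (he : GcdRecursion g β e) (h0 : 0 < e 0)
    (hβmono : ∀ j, 1 ≤ j → j < g → β j < β (j + 1))
    (hnn : ∀ j, 1 ≤ j → j ≤ g → nn j = e (j - 1) / e j) (hbb : GeneratorRecursion g β nn bb)
    {j : ℕ} (h1 : 1 ≤ j) (hj : j < g) : bb j ≤ bb (j + 1) := by
  have hnn_pos : 0 < nn j := by
    rw [hnn j h1 hj.le]
    exact Nat.div_pos (Nat.le_of_dvd (he.pos h0 _ (by omega)) (he.dvd_pred h1 hj.le))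
      (he.pos h0 j hj.le)
  have hbb_le : bb j ≤ nn j * bb j := Nat.le_mul_of_pos_left _ hnn_pos
  have hβ_le := hbb.β_le h1 hj.le
  have hβ_lt := hβmono j h1 hj
  rw [hbb.succ_eq h1 hj]
  omega

theorem bb_mono (he : GcdRecursion g β e) (h0 : 0 < e 0)
    (hβmono : ∀ j, 1 ≤ j → j < g → β j < β (j + 1))
    (hnn : ∀ j, 1 ≤ j → j ≤ g → nn j = e (j - 1) / e j) (hbb : GeneratorRecursion g β nn bb)
    {i j : ℕ} (h1 : 1 ≤ i) (hij : i ≤ j) (hj : j ≤ g) : bb i ≤ bb j := by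
  induction j, hij using Nat.le_induction with
  | base => exact le_rfl
  | succ j hij ih =>
    exact (ih (by omega)).trans (bb_le_bb_succ he h0 hβmono hnn hbb (by omega) hj)

theorem add_bb_succ_sub_bb_modEq (he : GcdRecursion g β e) (hbb : GeneratorRecursion g β nn bb)
    {i μ : ℕ} (h1 : 1 ≤ i) (hi : i < g) (hle : bb i ≤ μ + bb (i + 1))
    (hμ : μ ≡ β i [MOD e (i - 1)]) : μ + bb (i + 1) - bb i ≡ β (i + 1) [MOD e i] := by
  have hμ0 : μ ≡ 0 [MOD e i] :=
    (hμ.of_dvd (he.dvd_pred h1 hi.le)).trans (Nat.modEq_zero_iff_dvd.2 (he.dvd_β h1 hi.le))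
  have hbb0 : bb i ≡ 0 [MOD e i] := Nat.modEq_zero_iff_dvd.2 (e_dvd_bb he hbb h1 hi.le)
  have hsucc := bb_succ_modEq he hbb h1 hi (e_dvd_bb he hbb h1 hi.le)
  refine Nat.ModEq.add_right_cancel hbb0 ?_
  rw [Nat.sub_add_cancel hle, add_zero]
  simpa using hμ0.add hsucc

end PlaneBranch

open PlaneBranch

theorem cw_collection_multistep_general (n g : ℕ) (hn : 2 ≤ n)
    (β e nn bb : ℕ → ℕ)
    (he0 : e 0 = n)
    (he : ∀ j, 1 ≤ j → j ≤ g → e j = Nat.gcd (e (j - 1)) (β j))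
    (hβmono : ∀ j, 1 ≤ j → j < g → β j < β (j + 1))
    (hnn : ∀ j, 1 ≤ j → j ≤ g → nn j = e (j - 1) / e j)
    (hbb1 : bb 1 = β 1)
    (hbb : ∀ j, 2 ≤ j → j ≤ g → bb j = nn (j - 1) * bb (j - 1) - β (j - 1) + β j)
    (T : Set ℕ)
    (hstep : ∀ lam ∈ T, ∀ l, 1 ≤ l → l < g → lam ≤ bb l →
      lam % e (l - 1) = β l % e (l - 1) → lam + bb (l + 1) - bb l ∈ T) :
    ∀ lam ∈ T, ∀ l k, 1 ≤ l → l < k → k ≤ g → lam ≤ bb l →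
      lam % e (l - 1) = β l % e (l - 1) → lam + bb k - bb l ∈ T := by
  intro lam hlam l k hl hlk hkg hle hmod
  have h0 : 0 < e 0 := by omega
  have hgen : GeneratorRecursion g β nn bb := ⟨hbb1, hbb⟩
  suffices ∀ i, l ≤ i → i ≤ g → lam + bb i - bb l ∈ T ∧ lam + bb i - bb l ≤ bb i ∧
      lam + bb i - bb l ≡ β i [MOD e (i - 1)] from (this k hlk.le hkg).1
  intro i hli
  induction i, hli using Nat.le_induction with
  | base => rw [Nat.add_sub_cancel]; exact fun _ => ⟨hlam, hle, hmod⟩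
  | succ i hli ih =>
    intro hi
    obtain ⟨hμT, hμle, hμmod⟩ := ih (by omega)
    have hli' := bb_mono he h0 hβmono hnn hgen hl hli (by omega)
    have hi' := bb_le_bb_succ he h0 hβmono hnn hgen (by omega) hi
    have hshift : lam + bb i - bb l + bb (i + 1) - bb i = lam + bb (i + 1) - bb l := by omega
    rw [← hshift, Nat.add_sub_cancel]
    exact ⟨hstep _ hμT i (by omega) hi hμle hμmod, by omega,
      add_bb_succ_sub_bb_modEq he hgen (by omega) hi (by omega) hμmod⟩

/-- If `T` is a `𝒞^w`-collection, `λ ∈ T` with `λ ≤ β̄_l` and `λ ≡ β_l (mod e_{l−1})`,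
then `λ + β̄_k − β̄_l ∈ T` for every `l < k ≤ g`. -/
theorem cw_collection_multistep (n g : ℕ) (hn : 2 ≤ n) (hg : 1 ≤ g)
    (β e nn bb : ℕ → ℕ)
    (he0 : e 0 = n)
    (he : ∀ j, 1 ≤ j → j ≤ g → e j = Nat.gcd (e (j - 1)) (β j))
    (heg : e g = 1)
    (hβmono : ∀ j, 1 ≤ j → j < g → β j < β (j + 1))
    (hchar : ∀ j, 1 ≤ j → j ≤ g → ¬ e (j - 1) ∣ β j)
    (hβ1 : n < β 1)
    (hnn : ∀ j, 1 ≤ j → j ≤ g → nn j = e (j - 1) / e j)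
    (hbb1 : bb 1 = β 1)
    (hbb : ∀ j, 2 ≤ j → j ≤ g → bb j = nn (j - 1) * bb (j - 1) - β (j - 1) + β j)
    (S₀ : Set ℕ)
    (hS₀ : S₀ = (AddSubmonoid.closure ({n} ∪ bb '' Set.Icc 1 g) : AddSubmonoid ℕ))
    (T : Set ℕ)
    (hTpos : ∀ m ∈ T, 0 < m)
    (hTS : ∀ m ∈ T, ∀ s ∈ S₀, m + s ∈ T)
    (hstep : ∀ lam ∈ T, ∀ l, 1 ≤ l → l < g → lam ≤ bb l →
      lam % e (l - 1) = β l % e (l - 1) → lam + bb (l + 1) - bb l ∈ T) :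
    ∀ lam ∈ T, ∀ l k, 1 ≤ l → l < k → k ≤ g → lam ≤ bb l →
      lam % e (l - 1) = β l % e (l - 1) → lam + bb k - bb l ∈ T :=
  cw_collection_multistep_general n g hn β e nn bb he0 he hβmono hnn hbb1 hbb T hstep
end

section
/- For each 1 ≤ j ≤ g, β̄_j is divisible by e_j, and n_j = min{ r ∈ ℤ_{>0} : r·β̄_j ∈ (e_{j−1}) }. -/
/-!
The whole statement follows from the invariant `gcd (e_{j-1}, β̄_j) = e_j`. It holds for `j = 1`
since `β̄_1 = β_1`, and it propagates because `e_j` divides both `n_j β̄_j = e_{j-1} (β̄_j / e_j)`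
and `β_j`, so `β̄_{j+1} ≡ β_{j+1} (mod e_j)` and `gcd (e_j, β̄_{j+1}) = gcd (e_j, β_{j+1}) = e_{j+1}`.
Then `e_j ∣ β̄_j`, and `n_j = e_{j-1} / gcd (e_{j-1}, β̄_j)` is the additive order of `β̄_j`
in `ℤ/e_{j-1}`.
-/

theorem Nat.isLeast_pos_dvd_mul {a : ℕ} (b : ℕ) (ha : 0 < a) :
    IsLeast {r : ℕ | 0 < r ∧ a ∣ r * b} (a / a.gcd b) := by
  have : NeZero a := ⟨ha.ne'⟩
  have hdvd_iff : ∀ r, a ∣ r * b ↔ r • (b : ZMod a) = 0 := fun r => by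
    rw [nsmul_eq_mul, ← Nat.cast_mul, ZMod.natCast_eq_zero_iff]
  rw [← ZMod.addOrderOf_coe b ha.ne']
  refine ⟨⟨addOrderOf_pos _, (hdvd_iff _).2 (addOrderOf_nsmul_eq_zero _)⟩, ?_⟩
  rintro r ⟨hr, hrb⟩
  exact Nat.le_of_dvd hr (addOrderOf_dvd_of_nsmul_eq_zero ((hdvd_iff r).1 hrb))

section PlaneBranch

variable {g : ℕ} {β e nn bb : ℕ → ℕ}

theorem pos_of_gcd_chain (he0 : 0 < e 0)
    (he : ∀ j, 1 ≤ j → j ≤ g → e j = Nat.gcd (e (j - 1)) (β j)) :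
    ∀ j, j ≤ g → 0 < e j := by
  intro j hjg
  induction j with
  | zero => exact he0
  | succ k ih =>
    rw [he (k + 1) (by omega) hjg, Nat.add_sub_cancel]
    exact Nat.gcd_pos_of_pos_left _ (ih (by omega))

theorem gcd_pred_bb_eq
    (he : ∀ j, 1 ≤ j → j ≤ g → e j = Nat.gcd (e (j - 1)) (β j))
    (hnn : ∀ j, 1 ≤ j → j ≤ g → nn j = e (j - 1) / e j)
    (hbb1 : bb 1 = β 1)
    (hbb : ∀ j, 2 ≤ j → j ≤ g → bb j = nn (j - 1) * bb (j - 1) - β (j - 1) + β j) :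
    ∀ j, 1 ≤ j → j ≤ g → Nat.gcd (e (j - 1)) (bb j) = e j := by
  intro j hj hjg
  induction j, hj using Nat.le_induction with
  | base => rw [he 1 le_rfl hjg, hbb1]
  | succ k hk ih =>
    have hkg : k ≤ g := by omega
    have hek_bb : e k ∣ bb k := ih hkg ▸ Nat.gcd_dvd_right _ _
    have hek_pred : e k ∣ e (k - 1) := he k hk hkg ▸ Nat.gcd_dvd_left _ _
    have hek_β : e k ∣ β k := he k hk hkg ▸ Nat.gcd_dvd_right _ _
    have hek_step : e k ∣ nn k * bb k - β k := by
      refine Nat.dvd_sub (hek_pred.trans ?_) hek_β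
      rw [hnn k hk hkg, Nat.div_mul_right_comm hek_pred, Nat.mul_div_assoc _ hek_bb]
      exact dvd_mul_right _ _
    rw [Nat.add_sub_cancel, hbb (k + 1) (by omega) hjg, Nat.add_sub_cancel,
      Nat.gcd_add_left_right_of_dvd _ hek_step, he (k + 1) (by omega) hjg, Nat.add_sub_cancel]

end PlaneBranch

theorem e_dvd_bb_and_nn_least_general (n g : ℕ) (hn : 2 ≤ n)
    (β e nn bb : ℕ → ℕ)
    (he0 : e 0 = n)
    (he : ∀ j, 1 ≤ j → j ≤ g → e j = Nat.gcd (e (j - 1)) (β j))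
    (hnn : ∀ j, 1 ≤ j → j ≤ g → nn j = e (j - 1) / e j)
    (hbb1 : bb 1 = β 1)
    (hbb : ∀ j, 2 ≤ j → j ≤ g → bb j = nn (j - 1) * bb (j - 1) - β (j - 1) + β j) :
    ∀ j, 1 ≤ j → j ≤ g →
      e j ∣ bb j ∧ IsLeast {r : ℕ | 0 < r ∧ e (j - 1) ∣ r * bb j} (nn j) := by
  intro j hj hjg
  have hgcd := gcd_pred_bb_eq he hnn hbb1 hbb j hj hjg
  have hpos : 0 < e (j - 1) := pos_of_gcd_chain (by omega) he (j - 1) (by omega)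
  refine ⟨hgcd ▸ Nat.gcd_dvd_right _ _, ?_⟩
  rw [hnn j hj hjg, ← hgcd]
  exact Nat.isLeast_pos_dvd_mul _ hpos

/-- For each `1 ≤ j ≤ g`, `β̄_j` is divisible by `e_j`, and
`n_j = min{r ∈ ℤ_{>0} : r·β̄_j ∈ (e_{j−1})}`. -/
theorem e_dvd_bb_and_nn_least (n g : ℕ) (hn : 2 ≤ n) (hg : 1 ≤ g)
    (β e nn bb : ℕ → ℕ)
    (he0 : e 0 = n)
    (he : ∀ j, 1 ≤ j → j ≤ g → e j = Nat.gcd (e (j - 1)) (β j))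
    (heg : e g = 1)
    (hβmono : ∀ j, 1 ≤ j → j < g → β j < β (j + 1))
    (hchar : ∀ j, 1 ≤ j → j ≤ g → ¬ e (j - 1) ∣ β j)
    (hβ1 : n < β 1)
    (hnn : ∀ j, 1 ≤ j → j ≤ g → nn j = e (j - 1) / e j)
    (hbb1 : bb 1 = β 1)
    (hbb : ∀ j, 2 ≤ j → j ≤ g → bb j = nn (j - 1) * bb (j - 1) - β (j - 1) + β j) :
    ∀ j, 1 ≤ j → j ≤ g →
      e j ∣ bb j ∧ IsLeast {r : ℕ | 0 < r ∧ e (j - 1) ∣ r * bb j} (nn j) :=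
  e_dvd_bb_and_nn_least_general n g hn β e nn bb he0 he hnn hbb1 hbb
end

section
/- β̄_j is the minimum element of the semigroup S_Γ that is not a multiple of e_{j−1}, for each 1 ≤ j ≤ g. -/
/-- `β̄_j` is the minimum element of the semigroup `S_Γ = ⟨n, β̄₁, ..., β̄_g⟩` that is not
a multiple of `e_{j−1}`, for each `1 ≤ j ≤ g`. -/
theorem bb_least_not_multiple (n g : ℕ) (hn : 2 ≤ n) (hg : 1 ≤ g)
    (β e nn bb : ℕ → ℕ)
    (he0 : e 0 = n)
    (he : ∀ j, 1 ≤ j → j ≤ g → e j = Nat.gcd (e (j - 1)) (β j))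
    (heg : e g = 1)
    (hβmono : ∀ j, 1 ≤ j → j < g → β j < β (j + 1))
    (hchar : ∀ j, 1 ≤ j → j ≤ g → ¬ e (j - 1) ∣ β j)
    (hβ1 : n < β 1)
    (hnn : ∀ j, 1 ≤ j → j ≤ g → nn j = e (j - 1) / e j)
    (hnn2 : ∀ j, 1 ≤ j → j ≤ g → 2 ≤ nn j)
    (hbb1 : bb 1 = β 1)
    (hbb : ∀ j, 2 ≤ j → j ≤ g → bb j = nn (j - 1) * bb (j - 1) - β (j - 1) + β j)
    (SΓ : Set ℕ)
    (hSΓ : SΓ = (AddSubmonoid.closure ({n} ∪ bb '' Set.Icc 1 g) : AddSubmonoid ℕ)) :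
    ∀ j, 1 ≤ j → j ≤ g →
      IsLeast {m : ℕ | m ∈ SΓ ∧ ¬ e (j - 1) ∣ m} (bb j) := by
  -- e j ∣ e k for k ≤ j ≤ g
  have hedvd : ∀ k j : ℕ, k ≤ j → j ≤ g → e j ∣ e k := by
    intro k j hkj
    induction hkj with
    | refl => intro _; exact dvd_rfl
    | @step j' h ih =>
      intro hjg
      have h1 : e (j' + 1) ∣ e j' := by
        have := he (j' + 1) (by omega) hjg
        simp only [Nat.add_sub_cancel] at this
        rw [this]; exact Nat.gcd_dvd_left _ _
      exact dvd_trans h1 (ih (by omega))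
  have heβ : ∀ j, 1 ≤ j → j ≤ g → e j ∣ β j := by
    intro j h1 hj
    rw [he j h1 hj]; exact Nat.gcd_dvd_right _ _
  -- e k ∣ bb k
  have hebb : ∀ k, 1 ≤ k → k ≤ g → e k ∣ bb k := by
    intro k
    induction k with
    | zero => omega
    | succ m ih =>
      intro _ hk
      rcases Nat.lt_or_ge m 1 with hm | hm
      · -- m = 0, k = 1
        have hm0 : m = 0 := by omega
        subst hm0
        rw [hbb1]
        exact heβ 1 le_rfl hk
      · -- k = m + 1 ≥ 2
        have hkeq := hbb (m + 1) (by omega) hk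
        simp only [Nat.add_sub_cancel] at hkeq
        rw [hkeq]
        have hd1 : e (m + 1) ∣ bb m := dvd_trans (hedvd m (m+1) (by omega) hk)
          (ih hm (by omega))
        have hd2 : e (m + 1) ∣ β m := dvd_trans (hedvd m (m+1) (by omega) hk)
          (heβ m hm (by omega))
        have hd3 : e (m + 1) ∣ β (m + 1) := heβ (m + 1) (by omega) hk
        exact dvd_add (Nat.dvd_sub (Dvd.dvd.mul_left hd1 _) hd2) hd3
  -- β k ≤ bb k
  have hβbb : ∀ k, 1 ≤ k → k ≤ g → β k ≤ bb k := by
    intro k h1 hk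
    rcases Nat.lt_or_ge k 2 with h | h
    · have : k = 1 := by omega
      subst this; rw [hbb1]
    · have := hbb k h hk; omega
  -- bb monotone
  have hbbstep : ∀ m, 1 ≤ m → m < g → bb m < bb (m + 1) := by
    intro m h1 hm
    have hkeq := hbb (m + 1) (by omega) (by omega)
    simp only [Nat.add_sub_cancel] at hkeq
    have h2 : 2 * bb m ≤ nn m * bb m :=
      Nat.mul_le_mul_right (bb m) (hnn2 m h1 (by omega))
    have h3 : β m ≤ bb m := hβbb m h1 (by omega)
    have h4 : β m < β (m + 1) := hβmono m h1 hm
    omega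
  have hbbmono : ∀ j k, 1 ≤ j → j ≤ k → k ≤ g → bb j ≤ bb k := by
    intro j k h1 hjk
    induction hjk with
    | refl => intro _; exact le_rfl
    | @step k' h ih =>
      intro hkg
      have hk1 : 1 ≤ k' := le_trans h1 h
      exact le_trans (ih (by omega)) (le_of_lt (hbbstep k' hk1 (by omega)))
  intro j h1 hj
  have hjm1 : j - 1 ≤ g := by omega
  -- e (j-1) ∣ n
  have hen : e (j - 1) ∣ n := he0 ▸ hedvd 0 (j - 1) (Nat.zero_le _) hjm1
  constructor
  · constructor
    · rw [hSΓ]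
      exact AddSubmonoid.subset_closure (Or.inr ⟨j, ⟨h1, hj⟩, rfl⟩)
    · -- ¬ e (j-1) ∣ bb j
      rcases Nat.lt_or_ge j 2 with h2 | h2
      · have : j = 1 := by omega
        subst this
        rw [hbb1]
        exact hchar 1 le_rfl hj
      · intro hdvd
        rw [hbb j h2 hj] at hdvd
        have hd1 : e (j - 1) ∣ nn (j - 1) * bb (j - 1) - β (j - 1) :=
          Nat.dvd_sub (Dvd.dvd.mul_left (hebb (j - 1) (by omega) hjm1) _)
            (heβ (j - 1) (by omega) hjm1)
        exact hchar j (by omega) hj ((Nat.dvd_add_right hd1).mp hdvd)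
  · have key : ∀ m ∈ (AddSubmonoid.closure ({n} ∪ bb '' Set.Icc 1 g) : AddSubmonoid ℕ),
        e (j - 1) ∣ m ∨ bb j ≤ m := by
      intro m hmS
      induction hmS using AddSubmonoid.closure_induction with
      | mem x hx =>
        rcases hx with hx | ⟨k, ⟨hk1, hkg⟩, rfl⟩
        · left; simp only [Set.mem_singleton_iff] at hx; subst hx; exact hen
        · rcases Nat.lt_or_ge k j with hkj | hkj
          · left
            exact dvd_trans (hedvd k (j - 1) (by omega) hjm1) (hebb k hk1 hkg)
          · right
            exact hbbmono j k h1 hkj hkg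
      | zero => left; exact dvd_zero _
      | add a b _ _ iha ihb =>
        rcases iha with ha | ha
        · rcases ihb with hb | hb
          · left; exact dvd_add ha hb
          · right; omega
        · right; omega
    rintro m ⟨hmS, hmd⟩
    rw [hSΓ] at hmS
    rcases key m hmS with h | h
    · exact absurd h hmd
    · exact h
end

section
/- Suppose a, b are nonnegative integers with [a]_n a multiple class of e_l and [b]_n ∈ [β_{l+1}]_{e_l}, where a occurs as ν_Γ(Ω_a) for Ω_a in a separated family with pairwise incongruent classes mod n, b likewise; and suppose (r_b − r_a)β̄_{l+1} + (b − a) ≡ 0 (mod n) with 0 ≤ r_a, r_b < n_{l+1}. Then exactly one of the following holds: (1) r_b = r_a + 1, b ∈ (e_l), a ∈ [β_{l+1}]_{e_l}; or (2) r_b = n_{l+1} − 1, r_a = 0, b ∈ [β_{l+1}]_{e_l}, a ∈ (e_l). (Purely arithmetic core of Proposition on conflicting pairs.) -/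
/-! Modulo `e_l` the classes of `a` and `b` are `0` or `β̄_{l+1}`, whose additive order in
`ZMod e_l` is `n_{l+1}`. So the congruence says `(r_b - r_a) • β̄ + b = a` with
`0 < r_b - r_a < n_{l+1}`, which forces `r_b - r_a` to be `1` (when `a ≡ β̄`, `b ≡ 0`) or
`n_{l+1} - 1` (when `a ≡ 0`, `b ≡ β̄`); the other two class patterns would make
`(r_b - r_a) • β̄ = 0`. -/

theorem xor_of_nsmul_add_eq {G : Type*} [AddCancelMonoid G] {x a b : G} {d : ℕ} (hx : x ≠ 0)
    (hd : d < addOrderOf x) (hd0 : d ≠ 0) (ha : a = 0 ∨ a = x) (hb : b = 0 ∨ b = x)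
    (h : d • x + b = a) :
    Xor (d = 1 ∧ b = 0 ∧ a = x) (d + 1 = addOrderOf x ∧ b = x ∧ a = 0) := by
  have hmin : ∀ m < addOrderOf x, m • x = 0 → m = 0 := fun m hm hmx =>
    Nat.eq_zero_of_dvd_of_lt (addOrderOf_dvd_iff_nsmul_eq_zero.2 hmx) hm
  rw [xor_iff_or_and_not_and]
  refine ⟨?_, fun ⟨⟨_, hb0, _⟩, _, hbx, _⟩ => hx (hbx ▸ hb0)⟩
  rcases ha with ha | ha <;> rcases hb with hb | hb <;> rw [ha, hb] at h ⊢
  · exact absurd (hmin d hd (by simpa using h)) hd0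
  · have hdvd : addOrderOf x ∣ d + 1 := by
      rw [addOrderOf_dvd_iff_nsmul_eq_zero, succ_nsmul, h]
    exact Or.inr ⟨le_antisymm hd (Nat.le_of_dvd d.succ_pos hdvd), rfl, rfl⟩
  · obtain ⟨m, rfl⟩ := Nat.exists_eq_succ_of_ne_zero hd0
    have hm : m = 0 := hmin m (by omega) (by simpa [succ_nsmul] using h)
    exact Or.inl ⟨by rw [hm], rfl, rfl⟩
  · exact absurd (hmin d hd (by simpa using h)) hd0

theorem ZMod.addOrderOf_natCast_eq_of_isLeast {e β N : ℕ}
    (hN : IsLeast {r : ℕ | 0 < r ∧ e ∣ r * β} N) : addOrderOf (β : ZMod e) = N := by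
  have hsmul : ∀ r : ℕ, r • (β : ZMod e) = 0 ↔ e ∣ r * β := fun r => by
    rw [nsmul_eq_mul, ← Nat.cast_mul, ZMod.natCast_eq_zero_iff]
  rw [addOrderOf_eq_iff hN.1.1]
  exact ⟨(hsmul N).2 hN.1.2, fun m hm hm0 hmβ => hm.not_ge (hN.2 ⟨hm0, (hsmul m).1 hmβ⟩)⟩

theorem conflicting_pairs_arith_general (n el βl bb nl : ℕ)
    (heln : el ∣ n)
    (hbbne : ¬ el ∣ bb)
    (hcong : bb % el = βl % el)
    (hleast : IsLeast {r : ℕ | 0 < r ∧ el ∣ r * bb} nl)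
    (a b r_a r_b : ℕ)
    (ha : el ∣ a ∨ a % el = βl % el)
    (hb : el ∣ b ∨ b % el = βl % el)
    (hrb : r_b < nl) (hr : r_a ≤ r_b)
    (hdist : ¬ (r_a = r_b ∧ a % n = b % n))
    (hmain : (n : ℤ) ∣ (((r_b : ℤ) - r_a) * bb + ((b : ℤ) - a))) :
    Xor'
      (r_b = r_a + 1 ∧ el ∣ b ∧ a % el = βl % el)
      (r_b = nl - 1 ∧ r_a = 0 ∧ b % el = βl % el ∧ el ∣ a) := by
  obtain ⟨d, rfl⟩ := Nat.exists_eq_add_of_le hr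
  have hzero : ∀ c : ℕ, el ∣ c ↔ (c : ZMod el) = 0 := fun c =>
    (ZMod.natCast_eq_zero_iff c el).symm
  have hclass : ∀ c : ℕ, c % el = βl % el ↔ (c : ZMod el) = bb := fun c => by
    rw [ZMod.natCast_eq_natCast_iff', hcong]
  have hd0 : d ≠ 0 := by
    rintro rfl
    exact hdist ⟨rfl, Nat.modEq_iff_dvd.2 (by simpa using hmain)⟩
  have hstep : d • (bb : ZMod el) + b = a := by
    have h := (ZMod.intCast_zmod_eq_zero_iff_dvd _ el).2
      ((Int.natCast_dvd_natCast.2 heln).trans hmain)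
    push_cast at h
    rw [nsmul_eq_mul]
    linear_combination h
  have horder := ZMod.addOrderOf_natCast_eq_of_isLeast hleast
  have hfirst : (r_a + d = r_a + 1 ∧ el ∣ b ∧ a % el = βl % el) ↔
      (d = 1 ∧ (b : ZMod el) = 0 ∧ (a : ZMod el) = bb) :=
    and_congr (by omega) (and_congr (hzero b) (hclass a))
  have hsecond : (r_a + d = nl - 1 ∧ r_a = 0 ∧ b % el = βl % el ∧ el ∣ a) ↔
      (d + 1 = addOrderOf (bb : ZMod el) ∧ (b : ZMod el) = bb ∧ (a : ZMod el) = 0) := by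
    rw [← and_assoc, horder]
    exact and_congr (by omega) (and_congr (hclass b) (hzero a))
  rw [hfirst, hsecond]
  refine xor_of_nsmul_add_eq (mt (hzero bb).2 hbbne) (by omega) hd0 ?_ ?_ hstep
  · rwa [← hzero, ← hclass]
  · rwa [← hzero, ← hclass]

/-- Arithmetic core of the proposition on conflicting pairs.  Here `el = e_l`,
`el1 = e_{l+1}`, `βl = β_{l+1}`, `bb = β̄_{l+1}`, `nl = n_{l+1}`, and `a`, `b` are the
`Γ`-orders of two members of a separated family, twisted by powers `r_a ≤ r_b` of the
approximate root (the ordering `j < k` of the pair).  Then exactly one of the two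
stated alternatives holds. -/
theorem conflicting_pairs_arith (n el el1 βl bb nl : ℕ)
    (hn : 2 ≤ n) (heln : el ∣ n) (hel1 : el1 ∣ el)
    (hbbe : el1 ∣ bb) (hbbne : ¬ el ∣ bb)
    (hcong : bb % el = βl % el)
    (hleast : IsLeast {r : ℕ | 0 < r ∧ el ∣ r * bb} nl)
    (a b r_a r_b : ℕ)
    (ha : el ∣ a ∨ a % el = βl % el)
    (hb : el ∣ b ∨ b % el = βl % el)
    (hra : r_a < nl) (hrb : r_b < nl) (hr : r_a ≤ r_b)
    (hdist : ¬ (r_a = r_b ∧ a % n = b % n))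
    (hmain : (n : ℤ) ∣ (((r_b : ℤ) - r_a) * bb + ((b : ℤ) - a))) :
    Xor'
      (r_b = r_a + 1 ∧ el ∣ b ∧ a % el = βl % el)
      (r_b = nl - 1 ∧ r_a = 0 ∧ b % el = βl % el ∧ el ∣ a) :=
  conflicting_pairs_arith_general n el βl bb nl heln hbbne hcong hleast a b r_a r_b ha hb hrb hr
    hdist hmain
end

section
/- Let Λ be a 𝒞-collection containing some λ ≤ β̄_l. If λ + β̄_{l+1} − β̄_l ∈ Λ ∩ ℤ_{≤ β̄_{l+1}}, then λ + β̄_r − β̄_l ∈ Λ for every l < r ≤ g. In particular, a one-step closure property λ ≤ β̄_l ⇒ λ + β̄_{l+1} − β̄_l ∈ Λ implies the full multi-step closure λ + β̄_r − β̄_l ∈ Λ for all r > l. -/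
/-!
Writing `λ + β̄_r − β̄_l = β̄_r − (β̄_l − λ)`, the one-step closure moves the element
`β̄_k − (β̄_l − λ)` of `Λ` to `β̄_{k+1} − (β̄_l − λ)`, and it applies again at the next index
because `β̄_k − (β̄_l − λ) ≤ β̄_k`. Induction on `r` along the increasing sequence `β̄` concludes.
-/

theorem add_sub_mem_of_one_step {Λ : Set ℕ} {b : ℕ → ℕ} {l g : ℕ}
    (hmono : ∀ j, l ≤ j → j < g → b j ≤ b (j + 1))
    (hstep : ∀ μ ∈ Λ, ∀ j, l ≤ j → j < g → μ ≤ b j → μ + b (j + 1) - b j ∈ Λ)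
    {lam : ℕ} (hlam : lam ∈ Λ) (hle : lam ≤ b l) {r : ℕ} (hlr : l ≤ r) (hrg : r ≤ g) :
    lam + b r - b l ∈ Λ := by
  suffices h : lam + b r - b l ∈ Λ ∧ b l ≤ b r from h.1
  induction r, hlr using Nat.le_induction with
  | base => simpa using hlam
  | succ k hlk ih =>
    have hkg : k < g := by omega
    obtain ⟨hmem, hbl_le⟩ := ih hkg.le
    have hb_succ := hmono k hlk hkg
    have hnext := hstep _ hmem k hlk hkg (by omega)
    have hshift : lam + b k - b l + b (k + 1) - b k = lam + b (k + 1) - b l := by omega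
    exact ⟨hshift ▸ hnext, by omega⟩

theorem one_step_implies_multi_step_general (g : ℕ)
    (bb : ℕ → ℕ)
    (hmono : ∀ j, 1 ≤ j → j < g → bb j < bb (j + 1))
    (Λ : Set ℕ)
    (hstep : ∀ μ ∈ Λ, ∀ l, 1 ≤ l → l < g → μ ≤ bb l → μ + bb (l + 1) - bb l ∈ Λ) :
    ∀ lam ∈ Λ, ∀ l r, 1 ≤ l → l < r → r ≤ g → lam ≤ bb l →
      lam + bb r - bb l ∈ Λ := by
  intro lam hlam l r hl hlr hrg hle
  exact add_sub_mem_of_one_step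
    (fun j hj hjg => (hmono j (hl.trans hj) hjg).le)
    (fun μ hμ j hj hjg => hstep μ hμ j (hl.trans hj) hjg) hlam hle hlr.le hrg

/-- For `Λ ⊆ ℤ_{>0}` with `Λ + S_Γ ⊆ Λ`, the one-step closure property
(`λ ∈ Λ`, `λ ≤ β̄_l` implies `λ + β̄_{l+1} − β̄_l ∈ Λ`, with
`λ + β̄_{l+1} − β̄_l ≤ β̄_{l+1}`) implies the full multi-step closure
`λ + β̄_r − β̄_l ∈ Λ` for all `l < r ≤ g`. -/
theorem one_step_implies_multi_step (n g : ℕ) (hn : 2 ≤ n) (hg : 1 ≤ g)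
    (bb : ℕ → ℕ)
    (hpos : ∀ j, 1 ≤ j → j ≤ g → 0 < bb j)
    (hmono : ∀ j, 1 ≤ j → j < g → bb j < bb (j + 1))
    (hbig : ∀ j, 1 ≤ j → j < g → 2 * bb j < bb (j + 1))
    (SΓ : Set ℕ)
    (hSΓ : SΓ = (AddSubmonoid.closure ({n} ∪ bb '' Set.Icc 1 g) : AddSubmonoid ℕ))
    (Λ : Set ℕ)
    (hΛpos : ∀ m ∈ Λ, 0 < m)
    (hmod : ∀ m ∈ Λ, ∀ s ∈ SΓ, m + s ∈ Λ)
    (hstep : ∀ μ ∈ Λ, ∀ l, 1 ≤ l → l < g → μ ≤ bb l → μ + bb (l + 1) - bb l ∈ Λ) :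
    ∀ lam ∈ Λ, ∀ l r, 1 ≤ l → l < r → r ≤ g → lam ≤ bb l →
      lam + bb r - bb l ∈ Λ :=
  one_step_implies_multi_step_general g bb hmono Λ hstep
end

section
/- For a genus-2 branch with multiplicity n = 4, one has β̄₂ = β₁ + β₂; the ℂ[[x]]-basis of values for Γ is (n, β₁, n + β₂, β̄₂), it coincides with the S-basis of Λ_Γ, the 𝒞^w-basis of values is (n, β₁, n + β₂), the 𝒞-basis of values is (n, β₁), and n + β₂ ∉ S_Γ so Λ_Γ ≠ S_Γ. -/
section Collections

variable {S₀ : Set ℕ} {g : ℕ} {β e bb : ℕ → ℕ} {S T Λ : Set ℕ} {m s k : ℕ}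

theorem genC_subset (hT : IsCCollection S₀ g bb T) (hS : S ⊆ T) : genC S₀ g bb S ⊆ T :=
  Set.sInter_subset_of_mem ⟨hT, hS⟩

theorem subset_genC : S ⊆ genC S₀ g bb S :=
  fun _ hx => Set.mem_sInter.2 fun _ hT => hT.2 hx

theorem add_mem_genC (hm : m ∈ genC S₀ g bb S) (hs : s ∈ S₀) : m + s ∈ genC S₀ g bb S :=
  Set.mem_sInter.2 fun T hT => hT.1.2.1 m (Set.mem_sInter.1 hm T hT) s hs

theorem add_sub_mem_genC {j l : ℕ} (hm : m ∈ genC S₀ g bb S) (hj : 1 ≤ j) (hjl : j ≤ l)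
    (hl : l ≤ g) (hmj : m ≤ bb j) : m + bb l - bb j ∈ genC S₀ g bb S :=
  Set.mem_sInter.2 fun T hT =>
    hT.1.2.2 m (Set.mem_sInter.1 hm T hT) j hj (hjl.trans hl) hmj l hjl hl

theorem notMem_genC_inter_Iio (h : IsCCollection S₀ g bb (Λ \ {k})) :
    k ∉ genC S₀ g bb (Λ ∩ Set.Iio k) := fun hk =>
  (genC_subset h (fun _ hm => ⟨hm.1, hm.2.ne⟩) hk).2 rfl

theorem add_mem_genC_inter_Iio (hm : m ∈ Λ) (hs : s ∈ S₀) (hs0 : 0 < s) :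
    m + s ∈ genC S₀ g bb (Λ ∩ Set.Iio (m + s)) :=
  add_mem_genC (subset_genC ⟨hm, by simpa using hs0⟩) hs

theorem IsCCollection.of_genus_two (hpos : ∀ m ∈ T, 0 < m)
    (hadd : ∀ m ∈ T, ∀ s ∈ S₀, m + s ∈ T) (hrule : ∀ m ∈ T, m ≤ bb 1 → m + bb 2 - bb 1 ∈ T) :
    IsCCollection S₀ 2 bb T := by
  refine ⟨hpos, hadd, fun m hm j hj1 hj2 hmj l hjl hl2 => ?_⟩
  interval_cases j <;> interval_cases l
  · simpa using hm
  · exact hrule m hm hmj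
  · simpa using hm

theorem genCw_subset (hT : IsCwCollection S₀ g β e bb T) (hS : S ⊆ T) :
    genCw S₀ g β e bb S ⊆ T :=
  Set.sInter_subset_of_mem ⟨hT, hS⟩

theorem subset_genCw : S ⊆ genCw S₀ g β e bb S :=
  fun _ hx => Set.mem_sInter.2 fun _ hT => hT.2 hx

theorem add_mem_genCw (hm : m ∈ genCw S₀ g β e bb S) (hs : s ∈ S₀) :
    m + s ∈ genCw S₀ g β e bb S :=
  Set.mem_sInter.2 fun T hT => hT.1.2.1 m (Set.mem_sInter.1 hm T hT) s hs

theorem add_sub_mem_genCw {l : ℕ} (hm : m ∈ genCw S₀ g β e bb S) (hl : 1 ≤ l) (hlg : l < g)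
    (hml : m ≤ bb l) (hmod : m % e (l - 1) = β l % e (l - 1)) :
    m + bb (l + 1) - bb l ∈ genCw S₀ g β e bb S :=
  Set.mem_sInter.2 fun T hT => hT.1.2.2 m (Set.mem_sInter.1 hm T hT) l hl hlg hml hmod

theorem notMem_genCw_inter_Iio (h : IsCwCollection S₀ g β e bb (Λ \ {k})) :
    k ∉ genCw S₀ g β e bb (Λ ∩ Set.Iio k) := fun hk =>
  (genCw_subset h (fun _ hm => ⟨hm.1, hm.2.ne⟩) hk).2 rfl

theorem add_mem_genCw_inter_Iio (hm : m ∈ Λ) (hs : s ∈ S₀) (hs0 : 0 < s) :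
    m + s ∈ genCw S₀ g β e bb (Λ ∩ Set.Iio (m + s)) :=
  add_mem_genCw (subset_genCw ⟨hm, by simpa using hs0⟩) hs

theorem IsCwCollection.of_genus_two (hpos : ∀ m ∈ T, 0 < m)
    (hadd : ∀ m ∈ T, ∀ s ∈ S₀, m + s ∈ T)
    (hrule : ∀ m ∈ T, m ≤ bb 1 → m % e 0 = β 1 % e 0 → m + bb 2 - bb 1 ∈ T) :
    IsCwCollection S₀ 2 β e bb T := by
  refine ⟨hpos, hadd, fun m hm l hl1 hl2 hml hmod => ?_⟩
  obtain rfl : l = 1 := by omega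
  exact hrule m hm hml hmod

end Collections

section GenusTwo

variable {β1 β2 : ℕ} {S₀ K : Set ℕ} {β e bb : ℕ → ℕ} {m s k : ℕ}

/-- Contains `S_Γ = ⟨4, β₁, β₁ + β₂⟩` when `β₁ ≡ 2 mod 4` and `β₂` is odd. -/
def residueSubmonoid (β1 β2 : ℕ) : AddSubmonoid ℕ where
  carrier := {s | s % 4 = 0 ∨ (s % 4 = 2 ∧ β1 ≤ s) ∨ (s % 2 = 1 ∧ β1 + β2 ≤ s)}
  add_mem' := by simp only [Set.mem_ofPred_eq]; omega
  zero_mem' := by simp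

theorem mem_residueSubmonoid :
    s ∈ residueSubmonoid β1 β2 ↔
      s % 4 = 0 ∨ (s % 4 = 2 ∧ β1 ≤ s) ∨ (s % 2 = 1 ∧ β1 + β2 ≤ s) :=
  Iff.rfl

/-- The union of the progressions `a + 4ℕ`, `a ∈ {4, β₁, 4 + β₂, β₁ + β₂}`, written by residues
mod 4; it is `Λ_Γ` by `genC_eq_lambdaSet`. -/
def lambdaSet (β1 β2 : ℕ) : Set ℕ :=
  {m | (m % 4 = 0 ∧ 4 ≤ m) ∨ (m % 4 = β1 % 4 ∧ β1 ≤ m) ∨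
    (m % 4 = (4 + β2) % 4 ∧ 4 + β2 ≤ m) ∨ (m % 4 = (β1 + β2) % 4 ∧ β1 + β2 ≤ m)}

theorem mem_lambdaSet :
    m ∈ lambdaSet β1 β2 ↔ (m % 4 = 0 ∧ 4 ≤ m) ∨ (m % 4 = β1 % 4 ∧ β1 ≤ m) ∨
      (m % 4 = (4 + β2) % 4 ∧ 4 + β2 ≤ m) ∨ (m % 4 = (β1 + β2) % 4 ∧ β1 + β2 ≤ m) :=
  Iff.rfl

theorem basis_subset_lambdaSet : ({4, β1, 4 + β2, β1 + β2} : Set ℕ) ⊆ lambdaSet β1 β2 := by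
  rintro m (rfl | rfl | rfl | rfl) <;> rw [mem_lambdaSet] <;> omega

theorem sub_four_mem_lambdaSet (hm : m ∈ lambdaSet β1 β2)
    (hb : m ∉ ({4, β1, 4 + β2, β1 + β2} : Set ℕ)) : 4 ≤ m ∧ m - 4 ∈ lambdaSet β1 β2 := by
  simp only [Set.mem_insert_iff, Set.mem_singleton_iff, mem_lambdaSet] at *
  omega

theorem add_mem_lambdaSet (hmod : β1 % 4 = 2) (hodd : β2 % 2 = 1) (hm : m ∈ lambdaSet β1 β2)
    (hs : s ∈ residueSubmonoid β1 β2) : m + s ∈ lambdaSet β1 β2 := by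
  rw [mem_lambdaSet] at *
  rw [mem_residueSubmonoid] at hs
  omega

theorem four_le_of_mem_lambdaSet (h41 : 4 < β1) (hm : m ∈ lambdaSet β1 β2) : 4 ≤ m := by
  rw [mem_lambdaSet] at hm
  omega

theorem ne_add_of_mem_lambdaSet (hmod : β1 % 4 = 2) (hodd : β2 % 2 = 1) (h41 : 4 < β1)
    (hk : k ∈ ({4, β1, 4 + β2, β1 + β2} : Set ℕ)) (hm : m ∈ lambdaSet β1 β2)
    (hs : s ∈ residueSubmonoid β1 β2) (hmk : m < k) : k ≠ m + s := by
  simp only [Set.mem_insert_iff, Set.mem_singleton_iff] at hk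
  rw [mem_lambdaSet] at hm
  rw [mem_residueSubmonoid] at hs
  omega

theorem add_mem_lambdaSet_diff (hmod : β1 % 4 = 2) (hodd : β2 % 2 = 1) (h41 : 4 < β1)
    (hK : K ⊆ {4, β1, 4 + β2, β1 + β2}) (hm : m ∈ lambdaSet β1 β2 \ K)
    (hs : s ∈ residueSubmonoid β1 β2) : m + s ∈ lambdaSet β1 β2 \ K := by
  refine ⟨add_mem_lambdaSet hmod hodd hm.1 hs, fun hmsK => ?_⟩
  rcases Nat.eq_zero_or_pos s with rfl | hs0
  · exact hm.2 hmsK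
  · exact ne_add_of_mem_lambdaSet hmod hodd h41 (hK hmsK) hm.1 hs (by omega) rfl

theorem isCCollection_lambdaSet_diff (hmod : β1 % 4 = 2) (hodd : β2 % 2 = 1) (h41 : 4 < β1)
    (h12 : β1 < β2) (hS₀ : S₀ ⊆ residueSubmonoid β1 β2) (hbb1 : bb 1 = β1)
    (hbb2 : bb 2 = β1 + β2) (hK : K ⊆ {4, β1}) :
    IsCCollection S₀ 2 bb (lambdaSet β1 β2 \ K) := by
  refine .of_genus_two (fun m hm => by linarith [four_le_of_mem_lambdaSet h41 hm.1])
    (fun m hm s hs => add_mem_lambdaSet_diff hmod hodd h41 (hK.trans ?_) hm (hS₀ hs))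
    (fun m hm hmb => ?_)
  · exact Set.insert_subset_insert (by simp)
  · rw [hbb1] at hmb
    rw [hbb1, hbb2, show m + (β1 + β2) - β1 = m + β2 by omega]
    have hm' := hm.1
    rw [mem_lambdaSet] at hm'
    refine ⟨by rw [mem_lambdaSet]; omega, fun hK' => ?_⟩
    have := hK hK'
    simp only [Set.mem_insert_iff, Set.mem_singleton_iff] at this
    omega

theorem isCwCollection_lambdaSet_diff (hmod : β1 % 4 = 2) (hodd : β2 % 2 = 1) (h41 : 4 < β1)
    (hS₀ : S₀ ⊆ residueSubmonoid β1 β2) (hβ : β 1 = β1) (he0 : e 0 = 4)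
    (hbb1 : bb 1 = β1) (hbb2 : bb 2 = β1 + β2) (hK : K ⊆ {4, β1, 4 + β2}) :
    IsCwCollection S₀ 2 β e bb (lambdaSet β1 β2 \ K) := by
  refine .of_genus_two (fun m hm => by linarith [four_le_of_mem_lambdaSet h41 hm.1])
    (fun m hm s hs => add_mem_lambdaSet_diff hmod hodd h41 (hK.trans ?_) hm (hS₀ hs))
    (fun m hm hmb hres => ?_)
  · exact Set.insert_subset_insert (Set.insert_subset_insert (by simp))
  · rw [hbb1] at hmb
    rw [hβ, he0] at hres
    have hm' := hm.1
    rw [mem_lambdaSet] at hm'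
    rw [show m = β1 by omega, hbb1, hbb2, show β1 + (β1 + β2) - β1 = β1 + β2 by omega]
    refine ⟨basis_subset_lambdaSet (by simp), fun hK' => ?_⟩
    have := hK hK'
    simp only [Set.mem_insert_iff, Set.mem_singleton_iff] at this
    omega

theorem add_β2_mem_genC {S : Set ℕ} (hbb1 : bb 1 = β1) (hbb2 : bb 2 = β1 + β2)
    (hm : m ∈ genC S₀ 2 bb S) (hmb : m ≤ β1) : m + β2 ∈ genC S₀ 2 bb S := by
  have h := add_sub_mem_genC hm le_rfl one_le_two le_rfl (hbb1 ▸ hmb)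
  rwa [hbb1, hbb2, show m + (β1 + β2) - β1 = m + β2 by omega] at h

theorem add_β2_mem_genCw {S : Set ℕ} (hβ : β 1 = β1) (hbb1 : bb 1 = β1)
    (hbb2 : bb 2 = β1 + β2) (hm : β1 ∈ genCw S₀ 2 β e bb S) :
    β1 + β2 ∈ genCw S₀ 2 β e bb S := by
  have h := add_sub_mem_genCw hm le_rfl one_lt_two hbb1.ge (by rw [hβ])
  rwa [hbb1, hbb2, show β1 + (β1 + β2) - β1 = β1 + β2 by omega] at h

theorem genC_eq_lambdaSet (hmod : β1 % 4 = 2) (hodd : β2 % 2 = 1) (h41 : 4 < β1)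
    (h12 : β1 < β2) (hS₀ : S₀ ⊆ residueSubmonoid β1 β2) (h4 : 4 ∈ S₀) (hbb1 : bb 1 = β1)
    (hbb2 : bb 2 = β1 + β2) : genC S₀ 2 bb {4, β1} = lambdaSet β1 β2 := by
  refine (genC_subset ?_ ?_).antisymm fun m hm => ?_
  · simpa using isCCollection_lambdaSet_diff hmod hodd h41 h12 hS₀ hbb1 hbb2 (Set.empty_subset _)
  · exact (Set.insert_subset_insert (by simp)).trans basis_subset_lambdaSet
  have h4Λ : 4 ∈ genC S₀ 2 bb {4, β1} := subset_genC (by simp)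
  have hmodΛ : β1 ∈ genC S₀ 2 bb {4, β1} := subset_genC (by simp)
  induction m using Nat.strong_induction_on with
  | _ m ih =>
    by_cases hmb : m ∈ ({4, β1, 4 + β2, β1 + β2} : Set ℕ)
    · simp only [Set.mem_insert_iff, Set.mem_singleton_iff] at hmb
      rcases hmb with rfl | rfl | rfl | rfl
      exacts [h4Λ, hmodΛ, add_β2_mem_genC hbb1 hbb2 h4Λ h41.le,
        add_β2_mem_genC hbb1 hbb2 hmodΛ le_rfl]
    · obtain ⟨h4m, hsub⟩ := sub_four_mem_lambdaSet hm hmb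
      simpa [Nat.sub_add_cancel h4m] using add_mem_genC (ih (m - 4) (by omega) hsub) h4

theorem powerSeriesBasis_lambdaSet (hmod : β1 % 4 = 2) (hodd : β2 % 2 = 1) (h41 : 4 < β1) :
    {k | k ∈ lambdaSet β1 β2 ∧
        ¬∃ k' ∈ lambdaSet β1 β2, k' < k ∧ ∃ r : ℕ, 0 < r ∧ k = k' + r * 4} =
      {4, β1, 4 + β2, β1 + β2} := by
  ext k
  refine ⟨fun ⟨hk, hmin⟩ => by_contra fun hb => ?_, fun hb => ⟨basis_subset_lambdaSet hb, ?_⟩⟩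
  · obtain ⟨h4k, hsub⟩ := sub_four_mem_lambdaSet hk hb
    exact hmin ⟨k - 4, hsub, by omega, 1, one_pos, by omega⟩
  · rintro ⟨k', hk', hlt, r, -, hkr⟩
    exact ne_add_of_mem_lambdaSet hmod hodd h41 hb hk'
      (by rw [mem_residueSubmonoid]; omega) hlt hkr

theorem semigroupBasis_lambdaSet (hmod : β1 % 4 = 2) (hodd : β2 % 2 = 1) (h41 : 4 < β1)
    (hS₀ : S₀ ⊆ residueSubmonoid β1 β2) (h4 : 4 ∈ S₀) :
    {k | k ∈ lambdaSet β1 β2 ∧ ¬∃ k' ∈ lambdaSet β1 β2, k' < k ∧ ∃ s ∈ S₀, k = k' + s} =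
      {4, β1, 4 + β2, β1 + β2} := by
  ext k
  refine ⟨fun ⟨hk, hmin⟩ => by_contra fun hb => ?_, fun hb => ⟨basis_subset_lambdaSet hb, ?_⟩⟩
  · obtain ⟨h4k, hsub⟩ := sub_four_mem_lambdaSet hk hb
    exact hmin ⟨k - 4, hsub, by omega, 4, h4, by omega⟩
  · rintro ⟨k', hk', hlt, s, hs, hks⟩
    exact ne_add_of_mem_lambdaSet hmod hodd h41 hb hk' (hS₀ hs) hlt hks

theorem cwBasis_lambdaSet (hmod : β1 % 4 = 2) (hodd : β2 % 2 = 1) (h41 : 4 < β1)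
    (hS₀ : S₀ ⊆ residueSubmonoid β1 β2) (h4 : 4 ∈ S₀) (hβ : β 1 = β1)
    (he0 : e 0 = 4) (hbb1 : bb 1 = β1) (hbb2 : bb 2 = β1 + β2) :
    {k | k ∈ lambdaSet β1 β2 ∧ k ∉ genCw S₀ 2 β e bb (lambdaSet β1 β2 ∩ Set.Iio k)} =
      {4, β1, 4 + β2} := by
  ext k
  refine ⟨fun ⟨hk, hgen⟩ => by_contra fun hb => hgen ?_, fun hb => ⟨?_, ?_⟩⟩
  · by_cases hkb : k = β1 + β2
    · rw [hkb]
      exact add_β2_mem_genCw hβ hbb1 hbb2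
        (subset_genCw ⟨basis_subset_lambdaSet (by simp), by simp; omega⟩)
    · obtain ⟨h4k, hsub⟩ := sub_four_mem_lambdaSet hk (by simp [hkb] at hb ⊢; tauto)
      have h := add_mem_genCw_inter_Iio (g := 2) (β := β) (e := e) (bb := bb) hsub h4 four_pos
      rwa [Nat.sub_add_cancel h4k] at h
  · exact basis_subset_lambdaSet
      (Set.insert_subset_insert (Set.insert_subset_insert (by simp)) hb)
  · exact notMem_genCw_inter_Iio (isCwCollection_lambdaSet_diff hmod hodd h41 hS₀ hβ he0
      hbb1 hbb2 (Set.singleton_subset_iff.2 hb))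

theorem cBasis_lambdaSet (hmod : β1 % 4 = 2) (hodd : β2 % 2 = 1) (h41 : 4 < β1)
    (h12 : β1 < β2) (hS₀ : S₀ ⊆ residueSubmonoid β1 β2) (h4 : 4 ∈ S₀) (hbb1 : bb 1 = β1)
    (hbb2 : bb 2 = β1 + β2) :
    {k | k ∈ lambdaSet β1 β2 ∧ k ∉ genC S₀ 2 bb (lambdaSet β1 β2 ∩ Set.Iio k)} = {4, β1} := by
  ext k
  refine ⟨fun ⟨hk, hgen⟩ => by_contra fun hb => hgen ?_, fun hb => ⟨?_, ?_⟩⟩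
  · by_cases hk4 : k = 4 + β2
    · rw [hk4]
      exact add_β2_mem_genC hbb1 hbb2
        (subset_genC ⟨basis_subset_lambdaSet (by simp), by simp; omega⟩) h41.le
    by_cases hkb : k = β1 + β2
    · rw [hkb]
      exact add_β2_mem_genC hbb1 hbb2
        (subset_genC ⟨basis_subset_lambdaSet (by simp), by simp; omega⟩) le_rfl
    obtain ⟨h4k, hsub⟩ := sub_four_mem_lambdaSet hk (by simp [hk4, hkb] at hb ⊢; tauto)
    have h := add_mem_genC_inter_Iio (g := 2) (bb := bb) hsub h4 four_pos
    rwa [Nat.sub_add_cancel h4k] at h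
  · exact basis_subset_lambdaSet (Set.insert_subset_insert (by simp) hb)
  · exact notMem_genC_inter_Iio (isCCollection_lambdaSet_diff hmod hodd h41 h12 hS₀
      hbb1 hbb2 (Set.singleton_subset_iff.2 hb))

end GenusTwo

theorem mod_four_eq_two_of_gcd {b : ℕ} (h : Nat.gcd 4 b = 2) : b % 4 = 2 := by
  rw [Nat.gcd_rec] at h
  have : b % 4 < 4 := Nat.mod_lt _ (by norm_num)
  interval_cases b % 4 <;> simp_all

theorem genus_two_mult_four_general (β1 β2 : ℕ)
    (h41 : 4 < β1) (h12 : β1 < β2)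
    (hg1 : Nat.gcd 4 β1 = 2) (hg2 : Nat.gcd 2 β2 = 1)
    (β e bb : ℕ → ℕ)
    (hβ1 : β 1 = β1) (hβ2 : β 2 = β2)
    (he0 : e 0 = 4)
    (hbb1 : bb 1 = β1) (hbb2 : bb 2 = 2 * bb 1 - β 1 + β 2)
    (S₀ : Set ℕ)
    (hS₀ : S₀ = (AddSubmonoid.closure {4, bb 1, bb 2} : AddSubmonoid ℕ))
    (SΓ : Set ℕ) (hSΓ : SΓ = {m | 0 < m ∧ m ∈ S₀})
    (Λ : Set ℕ) (hΛ : Λ = genC S₀ 2 bb {4, β1}) :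
    bb 2 = β1 + β2 ∧
    {k | k ∈ Λ ∧ ¬ ∃ k' ∈ Λ, k' < k ∧ ∃ r : ℕ, 0 < r ∧ k = k' + r * 4}
      = {4, β1, 4 + β2, β1 + β2} ∧
    {k | k ∈ Λ ∧ ¬ ∃ k' ∈ Λ, k' < k ∧ ∃ s ∈ S₀, k = k' + s}
      = {4, β1, 4 + β2, β1 + β2} ∧
    {k | k ∈ Λ ∧ k ∉ genCw S₀ 2 β e bb (Λ ∩ Set.Iio k)}
      = {4, β1, 4 + β2} ∧
    {k | k ∈ Λ ∧ k ∉ genC S₀ 2 bb (Λ ∩ Set.Iio k)}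
      = {4, β1} ∧
    (4 + β2) ∉ SΓ ∧ Λ ≠ SΓ := by
  have hβ1_mod : β1 % 4 = 2 := mod_four_eq_two_of_gcd hg1
  have hβ2_odd : β2 % 2 = 1 := Nat.odd_iff.1 (Nat.coprime_two_left.1 hg2)
  have hbb : bb 2 = β1 + β2 := by rw [hbb2, hbb1, hβ1, hβ2]; omega
  have h4 : 4 ∈ S₀ := hS₀ ▸ AddSubmonoid.subset_closure (by simp)
  have hR : S₀ ⊆ residueSubmonoid β1 β2 := by
    rw [hS₀, SetLike.coe_subset_coe, AddSubmonoid.closure_le, hbb1, hbb]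
    simp only [Set.insert_subset_iff, Set.singleton_subset_iff, SetLike.mem_coe]
    refine ⟨?_, ?_, ?_⟩ <;> rw [mem_residueSubmonoid] <;> omega
  have h4β2 : 4 + β2 ∉ SΓ := fun h => by
    have := hR (hSΓ ▸ h).2
    rw [SetLike.mem_coe, mem_residueSubmonoid] at this
    omega
  rw [genC_eq_lambdaSet hβ1_mod hβ2_odd h41 h12 hR h4 hbb1 hbb] at hΛ
  subst hΛ
  exact ⟨hbb, powerSeriesBasis_lambdaSet hβ1_mod hβ2_odd h41,
    semigroupBasis_lambdaSet hβ1_mod hβ2_odd h41 hR h4,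
    cwBasis_lambdaSet hβ1_mod hβ2_odd h41 hR h4 hβ1 he0 hbb1 hbb,
    cBasis_lambdaSet hβ1_mod hβ2_odd h41 h12 hR h4 hbb1 hbb, h4β2,
    fun h => h4β2 (h ▸ basis_subset_lambdaSet (by simp))⟩

/-- For a genus-2 branch with multiplicity `n = 4`: `β̄₂ = β₁ + β₂`; the `ℂ[[x]]`-basis of
values is `(4, β₁, 4 + β₂, β̄₂)`, it coincides with the `S`-basis of `Λ_Γ`; the
`𝒞^w`-basis of values is `(4, β₁, 4 + β₂)`; the `𝒞`-basis of values is `(4, β₁)`; and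
`4 + β₂ ∉ S_Γ`, so `Λ_Γ ≠ S_Γ`. -/
theorem genus_two_mult_four (β1 β2 : ℕ)
    (h41 : 4 < β1) (h12 : β1 < β2)
    (hg1 : Nat.gcd 4 β1 = 2) (hg2 : Nat.gcd 2 β2 = 1)
    (β e bb : ℕ → ℕ)
    (hβ1 : β 1 = β1) (hβ2 : β 2 = β2)
    (he0 : e 0 = 4) (he1 : e 1 = Nat.gcd (e 0) (β 1)) (he2 : e 2 = Nat.gcd (e 1) (β 2))
    (hbb1 : bb 1 = β1) (hbb2 : bb 2 = 2 * bb 1 - β 1 + β 2)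
    (S₀ : Set ℕ)
    (hS₀ : S₀ = (AddSubmonoid.closure {4, bb 1, bb 2} : AddSubmonoid ℕ))
    (SΓ : Set ℕ) (hSΓ : SΓ = {m | 0 < m ∧ m ∈ S₀})
    (Λ : Set ℕ) (hΛ : Λ = genC S₀ 2 bb {4, β1}) :
    bb 2 = β1 + β2 ∧
    {k | k ∈ Λ ∧ ¬ ∃ k' ∈ Λ, k' < k ∧ ∃ r : ℕ, 0 < r ∧ k = k' + r * 4}
      = {4, β1, 4 + β2, β1 + β2} ∧
    {k | k ∈ Λ ∧ ¬ ∃ k' ∈ Λ, k' < k ∧ ∃ s ∈ S₀, k = k' + s}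
      = {4, β1, 4 + β2, β1 + β2} ∧
    {k | k ∈ Λ ∧ k ∉ genCw S₀ 2 β e bb (Λ ∩ Set.Iio k)}
      = {4, β1, 4 + β2} ∧
    {k | k ∈ Λ ∧ k ∉ genC S₀ 2 bb (Λ ∩ Set.Iio k)}
      = {4, β1} ∧
    (4 + β2) ∉ SΓ ∧ Λ ≠ SΓ :=
  genus_two_mult_four_general β1 β2 h41 h12 hg1 hg2 β e bb hβ1 hβ2 he0 hbb1 hbb2 S₀ hS₀ SΓ hSΓ Λ hΛ
end
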